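/- arXiv:1509.07632 — 4 statements merged into one kernel-verified Lean document; each statement's English description precedes it below -/
import Mathlib

section
/- Let U ⊣ R : B → A be an adjunction of codescent type (i.e. each unit component η_X : X → RU(X) is an equaliser) between accessible categories. Then an object X of A is presentable if and only if U(X) is presentable in B. -/
open CategoryTheory CategoryTheory.Limits Opposite

universe v u

section AccessiblePreamble

variable {C : Type u} [Category.{v} C]

/-- A small category `J` is `κ`-filtered if every diagram in `J` with fewer than `κ`
many morphisms admits a cocone. -/
def IsKappaFiltered (κ : Cardinal.{v}) (J : Type v) [SmallCategory J] : Prop :=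
  ∀ (K : Type v) [SmallCategory K],
    Cardinal.mk (Σ (a : K) (b : K), a ⟶ b) < κ →
      ∀ F : K ⥤ J, Nonempty (Limits.Cocone F)

/-- An object `X` is `κ`-presentable if its covariant hom-functor preserves colimits of
`κ`-filtered diagrams. -/
def IsKappaPresentable (κ : Cardinal.{v}) (X : C) : Prop :=
  ∀ (J : Type v) [SmallCategory J], IsKappaFiltered κ J →
    Nonempty (PreservesColimitsOfShape J (coyoneda.obj (op X)))

/-- An object is presentable if it is `κ`-presentable for some regular cardinal `κ`. -/
def IsPresentable (X : C) : Prop :=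
  ∃ κ : Cardinal.{v}, κ.IsRegular ∧ IsKappaPresentable κ X

variable (C)

/-- `C` has colimits of `κ`-filtered diagrams. -/
def HasKappaFilteredColimits (κ : Cardinal.{v}) : Prop :=
  ∀ (J : Type v) [SmallCategory J], IsKappaFiltered κ J → HasColimitsOfShape J C

/-- `C` is a `κ`-accessible category: `κ` is regular, `C` has `κ`-filtered colimits,
there is (up to isomorphism) only a small set of `κ`-presentable objects, and every
object is the colimit of a `κ`-filtered diagram of `κ`-presentable objects. -/
def IsKappaAccessibleCat (κ : Cardinal.{v}) : Prop :=
  κ.IsRegular ∧ HasKappaFilteredColimits C κ ∧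
  (∃ (ι : Type v) (G : ι → C), (∀ i, IsKappaPresentable κ (G i)) ∧
    ∀ X : C, IsKappaPresentable κ X → ∃ i, Nonempty (X ≅ G i)) ∧
  ∀ X : C, ∃ (J : Cat.{v, v}), IsKappaFiltered κ J ∧
    ∃ D : J ⥤ C, (∀ j : J, IsKappaPresentable κ (D.obj j)) ∧
      ∃ c : Cocone D, Nonempty (IsColimit c) ∧ Nonempty (c.pt ≅ X)

/-- `C` is an accessible category. -/
def IsAccessibleCat : Prop :=
  ∃ κ : Cardinal.{v}, IsKappaAccessibleCat C κ

/-- `C` is a locally presentable category: accessible and cocomplete. -/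
def IsLocallyPresentableCat : Prop :=
  IsAccessibleCat C ∧ HasColimits C

variable {C} {D : Type u} [Category.{v} D]

/-- A functor between accessible categories is accessible if it preserves `κ`-filtered
colimits for some regular cardinal `κ`. -/
def IsAccessibleFunctor (F : C ⥤ D) : Prop :=
  ∃ κ : Cardinal.{v}, κ.IsRegular ∧
    ∀ (J : Type v) [SmallCategory J], IsKappaFiltered κ J →
      Nonempty (PreservesColimitsOfShape J F)

end AccessiblePreamble

/-! Because the adjunction is of codescent type, `Hom(X, -)` is the equaliser of
`Hom(X, RU -) ⇉ Hom(X, RURU -)`, that is of `Hom(UX, U -) ⇉ Hom(UX, URU -)`.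
A right adjoint between accessible categories is accessible: the `κ`-presentable objects `p`
of `A` are dense, and `Hom(p, R -) ≅ Hom(Up, -)` where the `Up` form an essentially small
family of presentable objects, hence are all `λ`-presentable for one `λ`. So if `UX` is
presentable, both parallel functors preserve `λ`-filtered colimits for `λ` large, and so does
their equaliser, since finite limits commute with filtered colimits of sets. Conversely,
`Hom(UX, -) ≅ Hom(X, R -)` preserves `λ`-filtered colimits as soon as `X` is presentable. -/

universe w v₁ v₂ v₃ u₁ u₂ u₃

lemma Cardinal.IsRegular.max {a b : Cardinal} (ha : a.IsRegular) (hb : b.IsRegular) :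
    (max a b).IsRegular := by
  rcases le_total a b with h | h
  · rwa [max_eq_right h]
  · rwa [max_eq_left h]

namespace CategoryTheory

lemma exists_isCardinalPresentable_forall {C ι : Type*} [Category C] [Small.{w} ι] (X : ι → C)
    [∀ i, IsPresentable.{w} (X i)] (κ₀ : Cardinal.{w}) :
    ∃ (κ : Cardinal.{w}) (_ : Fact κ.IsRegular), κ₀ ≤ κ ∧ ∀ i, IsCardinalPresentable (X i) κ := by
  choose μ hμ hX using fun i => Functor.IsAccessible.exists_cardinal (F := coyoneda.obj (op (X i)))
  set κ := Order.succ (max (max κ₀ Cardinal.aleph0) (⨆ i, μ i))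
  have hμκ (i : ι) : μ i ≤ κ :=
    (le_ciSup Cardinal.bddAbove_of_small i).trans ((le_max_right _ _).trans (Order.le_succ _))
  have : Fact κ.IsRegular :=
    ⟨Cardinal.isRegular_succ ((le_max_right _ _).trans (le_max_left _ _))⟩
  refine ⟨κ, this, (le_max_left _ _).trans ((le_max_left _ _).trans (Order.le_succ _)), fun i => ?_⟩
  have := hμ i
  exact isCardinalPresentable_of_le (X i) (hμκ i)

noncomputable def Functor.isColimitOfIsDense {J : Type u₁} {C : Type u₂} {K : Type u₃}
    [Category.{v₁} J] [Category.{v₂} C] [Category.{v₃} K]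
    (F : J ⥤ C) [F.IsDense] {D : K ⥤ C} {c : Cocone D}
    (h : ∀ j, IsColimit ((coyoneda.obj (op (F.obj j))).mapCocone c)) : IsColimit c :=
  isColimitOfReflects (Presheaf.restrictedULiftYoneda.{0} F)
    (evaluationJointlyReflectsColimits _ fun j => isColimitOfPreserves uliftFunctor.{0} (h j.unop))

namespace Adjunction

variable {A B : Type*} [Category.{v} A] [Category.{v} B] {U : A ⥤ B} {R : B ⥤ A} (adj : U ⊣ R)

include adj in
theorem isAccessible_rightAdjoint [IsAccessibleCategory.{w} A] [IsAccessibleCategory.{w} B] :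
    R.IsAccessible.{w} := by
  obtain ⟨κ, _, _⟩ := IsAccessibleCategory.exists_cardinal.{w} A
  obtain ⟨Q, _, -, hPQ⟩ :=
    ObjectProperty.EssentiallySmall.exists_small_le (isCardinalPresentable A κ)
  obtain ⟨lam, _, hκlam, hUQ⟩ :=
    exists_isCardinalPresentable_forall (fun q : Subtype Q => U.obj q.1) κ
  have hUp (p : A) (hp : IsCardinalPresentable p κ) : IsCardinalPresentable (U.obj p) lam := by
    obtain ⟨q, hq, ⟨e⟩⟩ := hPQ _ hp
    have := hUQ ⟨q, hq⟩
    exact isCardinalPresentable_of_iso (U.mapIso e).symm lam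
  refine ⟨lam, inferInstance, ⟨fun J _ _ => ⟨fun {E} => ⟨fun {c} hc => ⟨?_⟩⟩⟩⟩⟩
  have := IsCardinalFiltered.of_le J hκlam
  refine (isCardinalPresentable A κ).ι.isColimitOfIsDense fun p => ?_
  have := hUp p.obj p.property
  have := preservesColimitsOfShape_of_isCardinalPresentable (U.obj p.obj) lam J
  exact (isColimitOfPreserves (coyoneda.obj (Opposite.op (U.obj p.obj))) hc).mapCoconeEquiv
    (adj.compCoyonedaIso.app (Opposite.op p.obj))

abbrev unitFork (X : A) :
    Fork (adj.unit.app (R.obj (U.obj X))) (R.map (U.map (adj.unit.app X))) :=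
  Fork.ofι (adj.unit.app X) (adj.unit_naturality _).symm

lemma isCardinalPresentable_of_isCardinalPresentable_leftAdjoint_obj
    (h : ∀ Y, IsLimit (adj.unitFork Y)) (κ : Cardinal.{w}) [Fact κ.IsRegular]
    [R.IsCardinalAccessible κ] (X : A) [IsCardinalPresentable (U.obj X) κ] :
    IsCardinalPresentable X κ := by
  let G := coyoneda.obj (Opposite.op X)
  let ι : G ⟶ (U ⋙ R) ⋙ G := Functor.whiskerRight adj.unit G
  let f : (U ⋙ R) ⋙ G ⟶ ((U ⋙ R) ⋙ (U ⋙ R)) ⋙ G :=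
    Functor.whiskerRight (Functor.whiskerLeft (U ⋙ R) adj.unit) G
  let g : (U ⋙ R) ⋙ G ⟶ ((U ⋙ R) ⋙ (U ⋙ R)) ⋙ G :=
    Functor.whiskerRight (Functor.whiskerRight adj.unit (U ⋙ R)) G
  have hw : ι ≫ f = ι ≫ g := by
    ext Y x
    dsimp [ι, f, g, G]
    rw [Category.assoc, Category.assoc, adj.unit_naturality]
  have hlim : IsLimit (Fork.ofι ι hw) := evaluationJointlyReflectsLimits _ fun Y =>
    (isLimitMapConeForkEquiv _ _).symm (isLimitForkMapOfIsLimit G _ (h Y))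
  have := adj.leftAdjoint_preservesColimits.{w, w}
  have : ((U ⋙ R) ⋙ G).IsCardinalAccessible κ :=
    Functor.isCardinalAccessible_of_natIso
      (Functor.isoWhiskerLeft U (adj.compCoyonedaIso.app (Opposite.op X))) κ
  have : (((U ⋙ R) ⋙ (U ⋙ R)) ⋙ G).IsCardinalAccessible κ :=
    Functor.isCardinalAccessible_of_natIso
      (Functor.isoWhiskerLeft (U ⋙ R ⋙ U) (adj.compCoyonedaIso.app (Opposite.op X))) κ
  have (j : WalkingParallelPair) : ((parallelPair f g).obj j).IsCardinalAccessible κ := by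
    cases j <;> assumption
  exact Functor.isCardinalAccessible_of_isLimit _ hlim κ
    (hasCardinalLT_of_finite _ _ (Cardinal.IsRegular.aleph0_le Fact.out))

lemma isPresentable_iff_isPresentable_leftAdjoint_obj (h : ∀ Y, IsLimit (adj.unitFork Y))
    [R.IsAccessible.{w}] (X : A) : IsPresentable.{w} X ↔ IsPresentable.{w} (U.obj X) := by
  obtain ⟨lam, _, _⟩ := Functor.IsAccessible.exists_cardinal (F := R)
  constructor
  · rintro ⟨κ, _, _⟩
    have : Fact (max κ lam).IsRegular := ⟨Cardinal.IsRegular.max Fact.out Fact.out⟩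
    have := isCardinalPresentable_of_le X (le_max_left κ lam)
    have := R.isCardinalAccessible_of_le (le_max_right κ lam)
    have := adj.isCardinalPresentable_leftAdjoint_obj (max κ lam) X
    exact isPresentable_of_isCardinalPresentable _ (max κ lam)
  · rintro ⟨κ, _, _⟩
    have : Fact (max κ lam).IsRegular := ⟨Cardinal.IsRegular.max Fact.out Fact.out⟩
    have := isCardinalPresentable_of_le (U.obj X) (le_max_left κ lam)
    have := R.isCardinalAccessible_of_le (le_max_right κ lam)
    have := adj.isCardinalPresentable_of_isCardinalPresentable_leftAdjoint_obj h (max κ lam) X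
    exact isPresentable_of_isCardinalPresentable _ (max κ lam)

end Adjunction

end CategoryTheory

section

variable {C : Type u} [Category.{v} C]

lemma isKappaFiltered_iff_isCardinalFiltered (κ : Cardinal.{v}) [Fact κ.IsRegular]
    (J : Type v) [SmallCategory J] : IsKappaFiltered κ J ↔ IsCardinalFiltered J κ := by
  have hcard (K : Type v) [SmallCategory K] :
      HasCardinalLT (Arrow K) κ ↔ Cardinal.mk (Σ (a : K) (b : K), a ⟶ b) < κ := by
    rw [hasCardinalLT_iff_of_equiv (Arrow.equivSigma K), hasCardinalLT_iff_cardinal_mk_lt]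
  exact ⟨fun h => ⟨fun F hK => h _ ((hcard _).1 hK) F⟩,
    fun h K _ hK F => h.nonempty_cocone F ((hcard K).2 hK)⟩

lemma isKappaPresentable_iff_isCardinalPresentable (κ : Cardinal.{v}) [Fact κ.IsRegular]
    (X : C) : IsKappaPresentable κ X ↔ IsCardinalPresentable X κ := by
  simp only [IsKappaPresentable, isKappaFiltered_iff_isCardinalFiltered]
  exact ⟨fun h => ⟨fun J _ hJ => (h J hJ).some⟩,
    fun h J _ hJ => ⟨preservesColimitsOfShape_of_isCardinalPresentable X κ J⟩⟩

lemma isPresentable_iff_isAccessible_coyoneda_obj (X : C) :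
    _root_.IsPresentable X ↔ (coyoneda.obj (op X)).IsAccessible.{v} := by
  constructor
  · rintro ⟨κ, hκ, hX⟩
    have : Fact κ.IsRegular := ⟨hκ⟩
    exact ⟨κ, this, (isKappaPresentable_iff_isCardinalPresentable κ X).1 hX⟩
  · rintro ⟨κ, hκ, hX⟩
    exact ⟨κ, hκ.out, (isKappaPresentable_iff_isCardinalPresentable κ X).2 hX⟩

lemma IsKappaAccessibleCat.isCardinalAccessibleCategory {κ : Cardinal.{v}} [Fact κ.IsRegular]
    (h : IsKappaAccessibleCat C κ) : IsCardinalAccessibleCategory C κ := by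
  obtain ⟨-, hcolim, ⟨ι, G, -, hG⟩, hpres⟩ := h
  simp only [isKappaPresentable_iff_isCardinalPresentable,
    isKappaFiltered_iff_isCardinalFiltered] at hG hpres
  have : ObjectProperty.EssentiallySmall.{v} (isCardinalPresentable C κ) := by
    refine ⟨ObjectProperty.ofObj G, inferInstance, fun X hX => ?_⟩
    obtain ⟨i, ⟨e⟩⟩ := hG X hX
    exact ⟨G i, ⟨i⟩, ⟨e⟩⟩
  refine { hasColimitsOfShape := fun J _ hJ =>
             hcolim J ((isKappaFiltered_iff_isCardinalFiltered κ J).2 hJ),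
           exists_generator := ⟨_, this, le_rfl, fun X => ?_⟩ }
  obtain ⟨J, hJ, D, hD, c, ⟨hc⟩, ⟨e⟩⟩ := hpres X
  exact ⟨J, inferInstance, hJ,
    ⟨{ toColimitPresentation := (⟨D, c.ι, hc⟩ : ColimitPresentation J c.pt).ofIso e
       prop_diag_obj := hD }⟩⟩

lemma IsAccessibleCat.isAccessibleCategory (h : IsAccessibleCat C) :
    IsAccessibleCategory.{v} C := by
  obtain ⟨κ, hκ⟩ := h
  have : Fact κ.IsRegular := ⟨hκ.1⟩
  exact ⟨κ, this, hκ.isCardinalAccessibleCategory⟩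

end

/-- Let `U ⊣ R : B → A` be an adjunction of codescent type (i.e. each unit component
`η_X : X → RU(X)` is an equaliser of the pair `η_{RU(X)}, RU(η_X)`) between accessible
categories.  Then an object `X` of `A` is presentable if and only if `U(X)` is
presentable in `B`. -/
theorem presentable_iff_of_codescent_adjunction
    {A : Type u} [Category.{v} A] {B : Type u} [Category.{v} B]
    (hA : IsAccessibleCat A) (hB : IsAccessibleCat B)
    (U : A ⥤ B) (R : B ⥤ A) (adj : U ⊣ R)
    (hw : ∀ X : A, adj.unit.app X ≫ adj.unit.app ((U ⋙ R).obj X) =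
      adj.unit.app X ≫ (U ⋙ R).map (adj.unit.app X))
    (hcodescent : ∀ X : A,
      Nonempty (Limits.IsLimit (Limits.Fork.ofι (adj.unit.app X) (hw X))))
    (X : A) :
    _root_.IsPresentable X ↔ _root_.IsPresentable (U.obj X) := by
  have := hA.isAccessibleCategory
  have := hB.isAccessibleCategory
  have := adj.isAccessible_rightAdjoint
  rw [isPresentable_iff_isAccessible_coyoneda_obj, isPresentable_iff_isAccessible_coyoneda_obj]
  exact adj.isPresentable_iff_isPresentable_leftAdjoint_obj (fun Y => (hcodescent Y).some) X
end

section
/- Over a field k, the family of coendomorphism coalgebras {coend(k^n) = (k^n)^* ⊗ k^n}_{n ≥ 1} forms a strong generator of the category of k-coalgebras: the induced family of hom-functors Coalg_k(coend(k^n), -) is jointly conservative, and moreover for every coalgebra C the canonical morphism from the coproduct of copies of coend(k^n) indexed by coalgebra morphisms coend(k^n) → C is a surjection onto C. -/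
open TensorProduct

universe u

/-- A right `C`-comodule structure on the `k`-module `M`. -/
def IsComoduleStruct {k M C : Type u} [CommRing k] [AddCommGroup M] [Module k M]
    [AddCommGroup C] [Module k C] [Coalgebra k C]
    (ρ : M →ₗ[k] M ⊗[k] C) : Prop :=
  (TensorProduct.rid k M).toLinearMap ∘ₗ
      LinearMap.lTensor M (Coalgebra.counit (R := k) (A := C)) ∘ₗ ρ = LinearMap.id ∧
  LinearMap.lTensor M (Coalgebra.comul (R := k) (A := C)) ∘ₗ ρ =
    (TensorProduct.assoc k M C C).toLinearMap ∘ₗ LinearMap.rTensor C ρ ∘ₗ ρ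

/-!
By the fundamental theorem of coalgebras every `x : C` lies in a finite-dimensional right coideal
`W ⊆ C`. Its coaction makes `W ≅ k^n` a comodule of which `x = (counit ⊗ id) (comul x)` is a
matrix coefficient. The matrix coefficients of a comodule on `k^n` are the images, under its
classifying morphism `coend(k^n) → C`, of those of the universal comodule; so `x` is hit.

If `f : C → D` makes every `f ∘ -` bijective, then by naturality pushforward along `f` is a
bijection on comodule structures on each `k^n`; surjectivity of `f` is the previous paragraph for
`D`. For injectivity let `f x = 0`. The restriction `φ : W → f(W)` is a map of `D`-comodules, and
the `D`-comodule `f(W)` lifts to a `C`-comodule. The shear `(w, v) ↦ (w, v + φ w)` of `W × f(W)`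
is colinear exactly when `φ` is, so faithfulness of pushforward makes `φ` colinear over `C`; then
`x = (counit ⊗ id) (δ x)` factors through `φ x = 0`.
-/

open LinearMap Coalgebra

section CommRing

variable {k : Type u} [CommRing k] {X Y Z C D : Type u}
  [AddCommGroup X] [Module k X] [AddCommGroup Y] [Module k Y] [AddCommGroup Z] [Module k Z]
  [AddCommGroup C] [Module k C] [AddCommGroup D] [Module k D]

def IsComoduleHom (ρ : X →ₗ[k] X ⊗[k] C) (τ : Y →ₗ[k] Y ⊗[k] C) (φ : X →ₗ[k] Y) : Prop :=
  φ.rTensor C ∘ₗ ρ = τ ∘ₗ φ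

def prodCoaction (ρ : X →ₗ[k] X ⊗[k] C) (τ : Y →ₗ[k] Y ⊗[k] C) :
    X × Y →ₗ[k] (X × Y) ⊗[k] C :=
  coprod ((inl k X Y).rTensor C ∘ₗ ρ) ((inr k X Y).rTensor C ∘ₗ τ)

def matrixCoeff (ρ : X →ₗ[k] X ⊗[k] C) (ℓ : X →ₗ[k] k) : X →ₗ[k] C :=
  (TensorProduct.lid k C).toLinearMap ∘ₗ ℓ.rTensor C ∘ₗ ρ

variable {ρ : X →ₗ[k] X ⊗[k] C} {τ : Y →ₗ[k] Y ⊗[k] C} {φ : X →ₗ[k] Y}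

namespace IsComoduleHom

theorem apply (hφ : IsComoduleHom ρ τ φ) (x : X) : φ.rTensor C (ρ x) = τ (φ x) :=
  LinearMap.congr_fun hφ x

theorem comp {ν : Z →ₗ[k] Z ⊗[k] C} {ψ : Y →ₗ[k] Z} (hψ : IsComoduleHom τ ν ψ)
    (hφ : IsComoduleHom ρ τ φ) : IsComoduleHom ρ ν (ψ ∘ₗ φ) := by
  rw [IsComoduleHom, rTensor_comp, comp_assoc, hφ, ← comp_assoc, hψ, comp_assoc]

theorem of_comp {ν : Z →ₗ[k] Z ⊗[k] C} {ψ : Y →ₗ[k] Z}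
    (hψφ : IsComoduleHom ρ ν (ψ ∘ₗ φ)) (hψ : IsComoduleHom τ ν ψ)
    (hinj : Function.Injective (ψ.rTensor C)) : IsComoduleHom ρ τ φ := by
  apply (cancel_left hinj).1
  rw [← comp_assoc, ← rTensor_comp, hψφ, ← comp_assoc, ← hψ, comp_assoc]

-- This and `counit_comp`, `comul_comp` keep the axiom expressions of `τ` and `ρ` as subterms, so
-- that the comodule axioms can be rewritten into them.
theorem coassoc_comp (hφ : IsComoduleHom ρ τ φ) :
    ((TensorProduct.assoc k Y C C).toLinearMap ∘ₗ τ.rTensor C ∘ₗ τ) ∘ₗ φ =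
      φ.rTensor (C ⊗[k] C) ∘ₗ (TensorProduct.assoc k X C C).toLinearMap ∘ₗ ρ.rTensor C ∘ₗ ρ := by
  ext x
  simp only [comp_apply, LinearEquiv.coe_coe, ← hφ.apply]
  rw [← rTensor_comp_apply, ← hφ, rTensor_comp_apply]
  induction ρ.rTensor C (ρ x) using TensorProduct.induction_on with
  | zero => simp
  | tmul t c => induction t using TensorProduct.induction_on <;> simp_all [TensorProduct.add_tmul]
  | add => simp_all

theorem matrixCoeff_comp (hφ : IsComoduleHom ρ τ φ) (ℓ : Y →ₗ[k] k) :
    matrixCoeff ρ (ℓ ∘ₗ φ) = matrixCoeff τ ℓ ∘ₗ φ := by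
  simp only [matrixCoeff, rTensor_comp, comp_assoc]
  rw [hφ]

end IsComoduleHom

theorem matrixCoeff_lTensor_comp (g : C →ₗ[k] D) (ρ : X →ₗ[k] X ⊗[k] C) (ℓ : X →ₗ[k] k) :
    matrixCoeff (g.lTensor X ∘ₗ ρ) ℓ = g ∘ₗ matrixCoeff ρ ℓ := by
  ext x
  simp only [matrixCoeff, comp_apply, LinearEquiv.coe_coe]
  induction ρ x using TensorProduct.induction_on <;> simp_all

theorem isComoduleHom_arrowCongr (u : X ≃ₗ[k] Y) (ρ : X →ₗ[k] X ⊗[k] C) :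
    IsComoduleHom ρ (u.arrowCongr (u.rTensor C) ρ) u.toLinearMap := by
  ext x
  exact congrArg (u.rTensor C) (congrArg ρ (u.symm_apply_apply x).symm)

theorem isComoduleHom_arrowCongr_symm (u : X ≃ₗ[k] Y) (ρ : X →ₗ[k] X ⊗[k] C) :
    IsComoduleHom (u.arrowCongr (u.rTensor C) ρ) ρ u.symm.toLinearMap := by
  ext x
  exact (u.rTensor C).symm_apply_apply _

theorem isComoduleHom_self_iff_arrowCongr_eq {σ : X →ₗ[k] X ⊗[k] C} (S : X ≃ₗ[k] X) :
    IsComoduleHom σ σ S.toLinearMap ↔ S.arrowCongr (S.rTensor C) σ = σ := by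
  refine ⟨fun h => LinearMap.ext fun x => ?_, fun h => LinearMap.ext fun x => ?_⟩
  · exact (h.apply (S.symm x)).trans (congrArg σ (S.apply_symm_apply x))
  · have hx := LinearMap.congr_fun h (S x)
    rw [LinearEquiv.arrowCongr_apply, S.symm_apply_apply] at hx
    exact hx

theorem isComoduleHom_inl_prodCoaction : IsComoduleHom ρ (prodCoaction ρ τ) (inl k X Y) :=
  (coprod_inl _ _).symm

theorem isComoduleHom_inr_prodCoaction : IsComoduleHom τ (prodCoaction ρ τ) (inr k X Y) :=
  (coprod_inr _ _).symm

theorem isComoduleHom_skewProd_iff :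
    IsComoduleHom (prodCoaction ρ τ) (prodCoaction ρ τ)
        ((LinearEquiv.refl k X).skewProd (LinearEquiv.refl k Y) φ).toLinearMap ↔
      IsComoduleHom ρ τ φ := by
  set S := (LinearEquiv.refl k X).skewProd (LinearEquiv.refl k Y) φ
  have hS_inl : S.toLinearMap ∘ₗ inl k X Y = inl k X Y + inr k X Y ∘ₗ φ := by ext <;> simp [S]
  have hS_inr : S.toLinearMap ∘ₗ inr k X Y = inr k X Y := by ext <;> simp [S]
  have hinr : Function.Injective ((inr k X Y).rTensor C) := by
    refine Function.LeftInverse.injective (g := (snd k X Y).rTensor C) fun t => ?_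
    rw [← rTensor_comp_apply, snd_comp_inr, rTensor_id, id_apply]
  have hleft : (S.toLinearMap.rTensor C ∘ₗ prodCoaction ρ τ) ∘ₗ inl k X Y =
      (inl k X Y).rTensor C ∘ₗ ρ + (inr k X Y).rTensor C ∘ₗ φ.rTensor C ∘ₗ ρ := by
    rw [comp_assoc, prodCoaction, coprod_inl, ← comp_assoc, ← rTensor_comp, hS_inl, rTensor_add,
      add_comp, rTensor_comp, comp_assoc]
  have hright : (prodCoaction ρ τ ∘ₗ S.toLinearMap) ∘ₗ inl k X Y =
      (inl k X Y).rTensor C ∘ₗ ρ + (inr k X Y).rTensor C ∘ₗ τ ∘ₗ φ := by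
    rw [comp_assoc, hS_inl, comp_add, prodCoaction, ← comp_assoc, coprod_inl, coprod_inr,
      comp_assoc]
  have hinr_eq : (S.toLinearMap.rTensor C ∘ₗ prodCoaction ρ τ) ∘ₗ inr k X Y =
      (prodCoaction ρ τ ∘ₗ S.toLinearMap) ∘ₗ inr k X Y := by
    rw [comp_assoc, comp_assoc, hS_inr, prodCoaction, coprod_inr, ← comp_assoc, ← rTensor_comp,
      hS_inr]
  rw [IsComoduleHom, prod_ext_iff, hleft, hright]
  refine ⟨fun h => LinearMap.ext fun x => hinr ?_, fun h => ⟨by rw [h], hinr_eq⟩⟩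
  have hx := LinearMap.congr_fun h.1 x
  simp only [LinearMap.add_apply, comp_apply] at hx
  exact add_left_cancel hx

theorem lTensor_comp_rTensor_comm {P Q : Type u} [AddCommGroup P] [Module k P] [AddCommGroup Q]
    [Module k Q] (f : X →ₗ[k] Y) (g : P →ₗ[k] Q) :
    g.lTensor Y ∘ₗ f.rTensor P = f.rTensor Q ∘ₗ g.lTensor X := by
  rw [lTensor_comp_rTensor, rTensor_comp_lTensor]

theorem lTensor_comp_arrowCongr (g : C →ₗ[k] D) (u : X ≃ₗ[k] Y) (ρ : X →ₗ[k] X ⊗[k] C) :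
    g.lTensor Y ∘ₗ u.arrowCongr (u.rTensor C) ρ =
      u.arrowCongr (u.rTensor D) (g.lTensor X ∘ₗ ρ) := by
  ext y
  exact LinearMap.congr_fun (lTensor_comp_rTensor_comm _ _) _

theorem lTensor_comp_prodCoaction (g : C →ₗ[k] D) :
    g.lTensor (X × Y) ∘ₗ prodCoaction ρ τ = prodCoaction (g.lTensor X ∘ₗ ρ) (g.lTensor Y ∘ₗ τ) := by
  apply prod_ext
  · rw [comp_assoc, prodCoaction, prodCoaction, coprod_inl, coprod_inl, ← comp_assoc,
      lTensor_comp_rTensor_comm, comp_assoc]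
  · rw [comp_assoc, prodCoaction, prodCoaction, coprod_inr, coprod_inr, ← comp_assoc,
      lTensor_comp_rTensor_comm, comp_assoc]

variable [Coalgebra k C] [Coalgebra k D]

namespace IsComoduleHom

theorem counit_comp (hφ : IsComoduleHom ρ τ φ) :
    ((TensorProduct.rid k Y).toLinearMap ∘ₗ (counit (R := k) (A := C)).lTensor Y ∘ₗ τ) ∘ₗ φ =
      φ ∘ₗ (TensorProduct.rid k X).toLinearMap ∘ₗ counit.lTensor X ∘ₗ ρ := by
  ext x
  simp only [comp_apply, LinearEquiv.coe_coe, ← hφ.apply]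
  induction ρ x using TensorProduct.induction_on <;> simp_all

theorem comul_comp (hφ : IsComoduleHom ρ τ φ) :
    ((comul (R := k) (A := C)).lTensor Y ∘ₗ τ) ∘ₗ φ =
      φ.rTensor (C ⊗[k] C) ∘ₗ comul.lTensor X ∘ₗ ρ := by
  rw [comp_assoc, ← hφ, ← comp_assoc, lTensor_comp_rTensor, ← rTensor_comp_lTensor, comp_assoc]

theorem pushforward_comul {ψ : X →ₗ[k] C} (hψ : IsComoduleHom ρ comul ψ) (g : C →ₗc[k] D) :
    IsComoduleHom (g.toLinearMap.lTensor X ∘ₗ ρ) comul (g.toLinearMap ∘ₗ ψ) := by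
  rw [IsComoduleHom, ← comp_assoc, rTensor_comp_lTensor, ← map_comp_rTensor, comp_assoc, hψ,
    ← comp_assoc, g.map_comp_comul, comp_assoc]

end IsComoduleHom

theorem matrixCoeff_comul_counit : matrixCoeff (comul (R := k) (A := C)) counit = LinearMap.id := by
  rw [matrixCoeff, rTensor_counit_comp_comul]
  ext
  simp

theorem IsComoduleHom.matrixCoeff_counit_comp {ψ : X →ₗ[k] C} (hψ : IsComoduleHom ρ comul ψ) :
    matrixCoeff ρ (counit ∘ₗ ψ) = ψ := by
  rw [hψ.matrixCoeff_comp, matrixCoeff_comul_counit, id_comp]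

namespace IsComoduleStruct

theorem of_isComoduleHom_surjective (hρ : IsComoduleStruct ρ) (hφ : IsComoduleHom ρ τ φ)
    (hs : Function.Surjective φ) : IsComoduleStruct τ := by
  refine ⟨(cancel_right hs).1 ?_, (cancel_right hs).1 ?_⟩
  · rw [hφ.counit_comp, hρ.1, comp_id, id_comp]
  · rw [hφ.comul_comp, hφ.coassoc_comp, hρ.2]

theorem of_isComoduleHom_injective (hτ : IsComoduleStruct τ) (hφ : IsComoduleHom ρ τ φ)
    (hinj : Function.Injective φ) (hinj₂ : Function.Injective (φ.rTensor (C ⊗[k] C))) :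
    IsComoduleStruct ρ := by
  refine ⟨(cancel_left hinj).1 ?_, (cancel_left hinj₂).1 ?_⟩
  · rw [← hφ.counit_comp, hτ.1, comp_id, id_comp]
  · rw [← hφ.comul_comp, ← hφ.coassoc_comp, hτ.2]

theorem arrowCongr_iff (u : X ≃ₗ[k] Y) :
    IsComoduleStruct (u.arrowCongr (u.rTensor C) ρ) ↔ IsComoduleStruct ρ :=
  ⟨fun h => h.of_isComoduleHom_surjective (isComoduleHom_arrowCongr_symm u ρ) u.symm.surjective,
    fun h => h.of_isComoduleHom_surjective (isComoduleHom_arrowCongr u ρ) u.surjective⟩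

theorem prod (hρ : IsComoduleStruct ρ) (hτ : IsComoduleStruct τ) :
    IsComoduleStruct (prodCoaction ρ τ) := by
  constructor <;> apply prod_ext
  · rw [isComoduleHom_inl_prodCoaction.counit_comp, hρ.1, comp_id, id_comp]
  · rw [isComoduleHom_inr_prodCoaction.counit_comp, hτ.1, comp_id, id_comp]
  · rw [isComoduleHom_inl_prodCoaction.comul_comp, isComoduleHom_inl_prodCoaction.coassoc_comp,
      hρ.2]
  · rw [isComoduleHom_inr_prodCoaction.comul_comp, isComoduleHom_inr_prodCoaction.coassoc_comp,
      hτ.2]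

theorem pushforward (hρ : IsComoduleStruct ρ) (g : C →ₗc[k] D) :
    IsComoduleStruct (g.toLinearMap.lTensor X ∘ₗ ρ) := by
  constructor
  · rw [← comp_assoc ρ, ← lTensor_comp, g.counit_comp, hρ.1]
  · rw [← comp_assoc ρ, ← lTensor_comp, ← g.map_comp_comul, lTensor_comp, comp_assoc, hρ.2]
    ext x
    simp only [comp_apply, LinearEquiv.coe_coe]
    induction ρ x using TensorProduct.induction_on with
    | zero => simp
    | tmul y c =>
      simp only [rTensor_tmul, comp_apply, lTensor_tmul]
      induction ρ y using TensorProduct.induction_on <;> simp_all [TensorProduct.add_tmul]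
    | add => simp_all

end IsComoduleStruct

theorem isComoduleStruct_comul : IsComoduleStruct (comul (R := k) (A := C)) :=
  ⟨by rw [lTensor_counit_comp_comul]; ext; simp, coassoc.symm⟩

namespace CoalgHom

variable (f : C →ₗc[k] D) (X)

def PushforwardInjective : Prop :=
  ∀ σ₁ σ₂ : X →ₗ[k] X ⊗[k] C, IsComoduleStruct σ₁ → IsComoduleStruct σ₂ →
    f.toLinearMap.lTensor X ∘ₗ σ₁ = f.toLinearMap.lTensor X ∘ₗ σ₂ → σ₁ = σ₂

def PushforwardSurjective : Prop :=
  ∀ τ : X →ₗ[k] X ⊗[k] D, IsComoduleStruct τ →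
    ∃ σ : X →ₗ[k] X ⊗[k] C, IsComoduleStruct σ ∧ f.toLinearMap.lTensor X ∘ₗ σ = τ

variable {f X}

theorem PushforwardInjective.of_linearEquiv (hf : f.PushforwardInjective X) (u : X ≃ₗ[k] Y) :
    f.PushforwardInjective Y := by
  intro σ₁ σ₂ h₁ h₂ h
  obtain ⟨ρ₁, rfl⟩ := (u.arrowCongr (u.rTensor C)).surjective σ₁
  obtain ⟨ρ₂, rfl⟩ := (u.arrowCongr (u.rTensor C)).surjective σ₂
  rw [IsComoduleStruct.arrowCongr_iff] at h₁ h₂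
  rw [lTensor_comp_arrowCongr, lTensor_comp_arrowCongr] at h
  exact congrArg _ (hf ρ₁ ρ₂ h₁ h₂ ((u.arrowCongr (u.rTensor D)).injective h))

theorem PushforwardSurjective.of_linearEquiv (hf : f.PushforwardSurjective X) (u : X ≃ₗ[k] Y) :
    f.PushforwardSurjective Y := by
  intro τ hτ
  obtain ⟨τ', rfl⟩ := (u.arrowCongr (u.rTensor D)).surjective τ
  obtain ⟨σ, hσ, rfl⟩ := hf τ' ((IsComoduleStruct.arrowCongr_iff u).1 hτ)
  exact ⟨u.arrowCongr (u.rTensor C) σ, (IsComoduleStruct.arrowCongr_iff u).2 hσ,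
    lTensor_comp_arrowCongr _ _ _⟩

end CoalgHom

theorem IsComoduleHom.of_pushforward {f : C →ₗc[k] D} (hf : f.PushforwardInjective (X × Y))
    (hρ : IsComoduleStruct ρ) (hτ : IsComoduleStruct τ)
    (hφ : IsComoduleHom (f.toLinearMap.lTensor X ∘ₗ ρ) (f.toLinearMap.lTensor Y ∘ₗ τ) φ) :
    IsComoduleHom ρ τ φ := by
  set S := (LinearEquiv.refl k X).skewProd (LinearEquiv.refl k Y) φ
  have hS : IsComoduleHom (f.toLinearMap.lTensor (X × Y) ∘ₗ prodCoaction ρ τ)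
      (f.toLinearMap.lTensor (X × Y) ∘ₗ prodCoaction ρ τ) S.toLinearMap := by
    rw [lTensor_comp_prodCoaction]
    exact isComoduleHom_skewProd_iff.2 hφ
  rw [← isComoduleHom_skewProd_iff, isComoduleHom_self_iff_arrowCongr_eq]
  refine hf _ _ ((IsComoduleStruct.arrowCongr_iff S).2 (hρ.prod hτ)) (hρ.prod hτ) ?_
  rw [lTensor_comp_arrowCongr, (isComoduleHom_self_iff_arrowCongr_eq S).1 hS]

def Submodule.IsRightCoideal (W : Submodule k C) : Prop :=
  ∀ w ∈ W, comul (R := k) w ∈ range (W.subtype.rTensor C)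

theorem Submodule.IsRightCoideal.map {W : Submodule k C} (hW : W.IsRightCoideal)
    (f : C →ₗc[k] D) : (W.map f.toLinearMap).IsRightCoideal := by
  rintro _ ⟨w, hw, rfl⟩
  obtain ⟨t, ht⟩ := hW w hw
  refine ⟨TensorProduct.map (f.toLinearMap.submoduleMap W) f.toLinearMap t, ?_⟩
  have hfw : comul (f.toLinearMap w) = TensorProduct.map f.toLinearMap f.toLinearMap (comul w) :=
    (LinearMap.congr_fun f.map_comp_comul w).symm
  rw [hfw, ← ht]
  clear ht
  induction t using TensorProduct.induction_on with
  | zero => rw [map_zero, map_zero, map_zero, map_zero]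
  | tmul x c => rfl
  | add t₁ t₂ h₁ h₂ => rw [map_add, map_add, map_add, map_add, h₁, h₂]

theorem comul_equivFinsuppOfBasisRight_apply {ι : Type*} [DecidableEq ι] (ℬ : Module.Basis ι k C)
    (x : C) (j : ι) :
    comul (R := k) (TensorProduct.equivFinsuppOfBasisRight ℬ (comul x) j) =
      (TensorProduct.equivFinsuppOfBasisRight ℬ (comul x)).sum fun i m =>
        m ⊗ₜ TensorProduct.equivFinsuppOfBasisRight ℬ (comul (ℬ i)) j := by
  have hx : comul (R := k) x =
      (TensorProduct.equivFinsuppOfBasisRight ℬ (comul x)).sum fun i c => c ⊗ₜ ℬ i := by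
    rw [← TensorProduct.equivFinsuppOfBasisRight_symm_apply, LinearEquiv.symm_apply_apply]
  have hcomul (t : C ⊗[k] C) :
      comul (R := k) (TensorProduct.rid k C ((ℬ.coord j).lTensor C t)) =
        TensorProduct.rid k (C ⊗[k] C) ((ℬ.coord j).lTensor (C ⊗[k] C) (comul.rTensor C t)) := by
    induction t using TensorProduct.induction_on <;> simp_all
  have hassoc (m : C) (s : C ⊗[k] C) :
      TensorProduct.rid k (C ⊗[k] C) ((ℬ.coord j).lTensor (C ⊗[k] C)
        ((TensorProduct.assoc k C C C).symm (m ⊗ₜ s))) =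
        m ⊗ₜ TensorProduct.rid k C ((ℬ.coord j).lTensor C s) := by
    induction s using TensorProduct.induction_on <;> simp_all [TensorProduct.tmul_add]
  simp only [TensorProduct.equivFinsuppOfBasisRight_apply]
  rw [hcomul, ← coassoc_symm_apply]
  conv_lhs => rw [hx, map_finsuppSum, map_finsuppSum, map_finsuppSum, map_finsuppSum]
  exact Finsupp.sum_congr fun i _ => by rw [lTensor_tmul, hassoc]

end CommRing

section Field

variable {k : Type u} [Field k] {C D : Type u} [AddCommGroup C] [Module k C] [Coalgebra k C]
  [AddCommGroup D] [Module k D] [Coalgebra k D]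

theorem Submodule.IsRightCoideal.exists_isComoduleStruct {W : Submodule k C}
    (hW : W.IsRightCoideal) :
    ∃ δ : W →ₗ[k] W ⊗[k] C, IsComoduleStruct δ ∧ IsComoduleHom δ comul W.subtype := by
  have hinj (M : Type u) [AddCommGroup M] [Module k M] : Function.Injective (W.subtype.rTensor M) :=
    Module.Flat.rTensor_preserves_injective_linearMap _ W.injective_subtype
  let δ := (LinearEquiv.ofInjective _ (hinj C)).symm.toLinearMap ∘ₗ
    (comul ∘ₗ W.subtype).codRestrict _ fun w => hW w w.2
  have hδ : IsComoduleHom δ comul W.subtype := LinearMap.ext fun w => by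
    simp only [coe_comp, LinearEquiv.coe_coe, Function.comp_apply,
      LinearEquiv.ofInjective_symm_apply, coe_subtype, δ]
    rfl
  exact ⟨δ, isComoduleStruct_comul.of_isComoduleHom_injective hδ W.injective_subtype (hinj _), hδ⟩

theorem exists_isRightCoideal_finiteDimensional_mem (x : C) :
    ∃ W : Submodule k C, W.IsRightCoideal ∧ FiniteDimensional k W ∧ x ∈ W := by
  classical
  let ℬ := Module.Basis.ofVectorSpace k C
  let a := TensorProduct.equivFinsuppOfBasisRight ℬ (comul (R := k) x)
  have ha : comul (R := k) x = a.sum fun i c => c ⊗ₜ ℬ i := by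
    rw [← TensorProduct.equivFinsuppOfBasisRight_symm_apply, LinearEquiv.symm_apply_apply]
  let W := Submodule.span k (a.frange : Set C)
  have ha_mem (i) : a i ∈ W := by
    by_cases hi : a i = 0
    · rw [hi]
      exact W.zero_mem
    · exact Submodule.subset_span (Finsupp.mem_frange.2 ⟨hi, i, rfl⟩)
  have hsum_mem (c : Module.Basis.ofVectorSpaceIndex k C → C) :
      (a.sum fun i m => m ⊗ₜ[k] c i) ∈ range (W.subtype.rTensor C) :=
    Submodule.finsuppSum_mem _ _ _ _ fun i _ => ⟨⟨a i, ha_mem i⟩ ⊗ₜ c i, rfl⟩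
  have hcomul (j) : comul (R := k) (a j) =
      a.sum fun i m => m ⊗ₜ TensorProduct.equivFinsuppOfBasisRight ℬ (comul (ℬ i)) j :=
    comul_equivFinsuppOfBasisRight_apply ℬ x j
  refine ⟨W, fun w hw => ?_, FiniteDimensional.span_finset k _, ?_⟩
  · have hW : W ≤ (range (W.subtype.rTensor C)).comap comul := Submodule.span_le.2 fun c hc => by
      obtain ⟨-, j, rfl⟩ := Finsupp.mem_frange.1 hc
      rw [SetLike.mem_coe, Submodule.mem_comap, hcomul]
      exact hsum_mem _
    exact hW hw
  · have hx : x = TensorProduct.rid k C ((counit (R := k)).lTensor C (comul x)) := by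
      rw [lTensor_counit_comul, rid_tmul, one_smul]
    rw [hx, ha, map_finsuppSum, map_finsuppSum]
    exact Submodule.finsuppSum_mem _ _ _ _ fun i _ => by
      rw [lTensor_tmul, rid_tmul]
      exact W.smul_mem _ (ha_mem i)

theorem exists_matrixCoeff_eq (x : C) :
    ∃ (n : ℕ) (ρ : (Fin n → k) →ₗ[k] (Fin n → k) ⊗[k] C), IsComoduleStruct ρ ∧
      ∃ (ℓ : (Fin n → k) →ₗ[k] k) (w : Fin n → k), matrixCoeff ρ ℓ w = x := by
  obtain ⟨W, hW, _, hxW⟩ := exists_isRightCoideal_finiteDimensional_mem (k := k) x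
  obtain ⟨δ, hδ, hδW⟩ := hW.exists_isComoduleStruct
  let u := (Module.finBasis k W).equivFun
  refine ⟨_, u.arrowCongr (u.rTensor C) δ, (IsComoduleStruct.arrowCongr_iff u).2 hδ,
    counit ∘ₗ W.subtype ∘ₗ u.symm.toLinearMap, u ⟨x, hxW⟩, ?_⟩
  rw [(hδW.comp (isComoduleHom_arrowCongr_symm u δ)).matrixCoeff_counit_comp]
  simp

theorem CoalgHom.injective_of_pushforward (f : C →ₗc[k] D)
    (hinj : ∀ n, f.PushforwardInjective (Fin n → k))
    (hsurj : ∀ n, f.PushforwardSurjective (Fin n → k)) : Function.Injective f := by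
  have hinj' (X : Type u) [AddCommGroup X] [Module k X] [FiniteDimensional k X] :
      f.PushforwardInjective X :=
    (hinj _).of_linearEquiv (Module.finBasis k X).equivFun.symm
  have hsurj' (X : Type u) [AddCommGroup X] [Module k X] [FiniteDimensional k X] :
      f.PushforwardSurjective X :=
    (hsurj _).of_linearEquiv (Module.finBasis k X).equivFun.symm
  refine (injective_iff_map_eq_zero f).2 fun x hx => ?_
  obtain ⟨W, hW, _, hxW⟩ := exists_isRightCoideal_finiteDimensional_mem (k := k) x
  set W' := W.map f.toLinearMap
  obtain ⟨δ, hδ, hδW⟩ := hW.exists_isComoduleStruct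
  obtain ⟨δ', hδ', hδ'W'⟩ := (hW.map f).exists_isComoduleStruct
  obtain ⟨τ, hτ, rfl⟩ := hsurj' W' δ' hδ'
  let φ := f.toLinearMap.submoduleMap W
  have hφD : IsComoduleHom (f.toLinearMap.lTensor W ∘ₗ δ) (f.toLinearMap.lTensor W' ∘ₗ τ) φ :=
    (hδW.pushforward_comul f).of_comp (ψ := W'.subtype) hδ'W'
      (Module.Flat.rTensor_preserves_injective_linearMap _ W'.injective_subtype)
  have hφC : IsComoduleHom δ τ φ := hφD.of_pushforward (hinj' _) hδ hτ
  have hcounit : counit ∘ₗ W.subtype = (counit ∘ₗ W'.subtype) ∘ₗ φ := by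
    rw [← f.counit_comp]
    rfl
  calc x = matrixCoeff δ (counit ∘ₗ W.subtype) ⟨x, hxW⟩ := by
        rw [hδW.matrixCoeff_counit_comp]
        rfl
    _ = matrixCoeff τ (counit ∘ₗ W'.subtype) (φ ⟨x, hxW⟩) := by
        rw [hcounit, hφC.matrixCoeff_comp]
        rfl
    _ = 0 := by rw [show φ ⟨x, hxW⟩ = 0 from Subtype.ext hx, map_zero]

end Field

section Corepresentation

variable {k : Type u} [CommRing k] {E : ℕ → Type u} [∀ n, AddCommGroup (E n)]
  [∀ n, Module k (E n)] [∀ n, Coalgebra k (E n)]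
  (e : ∀ (n : ℕ) (C : Type u) [AddCommGroup C] [Module k C] [Coalgebra k C],
    {ρ : (Fin n → k) →ₗ[k] (Fin n → k) ⊗[k] C // IsComoduleStruct ρ} ≃ (E n →ₗc[k] C))

def IsNaturalInCoalgebra : Prop :=
  ∀ (n : ℕ) (C C' : Type u) [AddCommGroup C] [Module k C] [Coalgebra k C]
    [AddCommGroup C'] [Module k C'] [Coalgebra k C'] (g : C →ₗc[k] C')
    (ρ : {ρ : (Fin n → k) →ₗ[k] (Fin n → k) ⊗[k] C // IsComoduleStruct ρ})
    (h : IsComoduleStruct (LinearMap.lTensor (Fin n → k) g.toLinearMap ∘ₗ ρ.1)),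
    e n C' ⟨LinearMap.lTensor (Fin n → k) g.toLinearMap ∘ₗ ρ.1, h⟩ = g.comp (e n C ρ)

variable {e} {n : ℕ} {C D : Type u}
  [AddCommGroup C] [Module k C] [Coalgebra k C] [AddCommGroup D] [Module k D] [Coalgebra k D]

theorem matrixCoeff_eq_comp_classifying (hnat : IsNaturalInCoalgebra e)
    (ρ : {ρ : (Fin n → k) →ₗ[k] (Fin n → k) ⊗[k] C // IsComoduleStruct ρ})
    (ℓ : (Fin n → k) →ₗ[k] k) :
    matrixCoeff ρ.1 ℓ =
      (e n C ρ).toLinearMap ∘ₗ matrixCoeff ((e n (E n)).symm (CoalgHom.id k (E n))).1 ℓ := by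
  set ρ₀ := (e n (E n)).symm (CoalgHom.id k (E n))
  have h := hnat n (E n) C (e n C ρ) ρ₀ (ρ₀.2.pushforward _)
  rw [Equiv.apply_symm_apply, CoalgHom.comp_id] at h
  rw [← matrixCoeff_lTensor_comp, ← congrArg Subtype.val ((e n C).injective h)]

theorem pushforwardInjective_of_injective_comp (hnat : IsNaturalInCoalgebra e) (f : C →ₗc[k] D)
    (hf : Function.Injective fun g : E n →ₗc[k] C => f.comp g) :
    f.PushforwardInjective (Fin n → k) := by
  intro σ₁ σ₂ h₁ h₂ h
  have h₁' := hnat n C D f ⟨σ₁, h₁⟩ (h₁.pushforward f)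
  have h₂' := hnat n C D f ⟨σ₂, h₂⟩ (h₂.pushforward f)
  have he : e n C ⟨σ₁, h₁⟩ = e n C ⟨σ₂, h₂⟩ := hf (by simp only [← h₁', ← h₂', h])
  exact congrArg Subtype.val ((e n C).injective he)

theorem pushforwardSurjective_of_surjective_comp (hnat : IsNaturalInCoalgebra e) (f : C →ₗc[k] D)
    (hf : Function.Surjective fun g : E n →ₗc[k] C => f.comp g) :
    f.PushforwardSurjective (Fin n → k) := by
  intro τ hτ
  obtain ⟨t, ht⟩ := hf (e n D ⟨τ, hτ⟩)
  set σ := (e n C).symm t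
  have h := hnat n C D f σ (σ.2.pushforward f)
  rw [Equiv.apply_symm_apply] at h
  exact ⟨σ.1, σ.2, congrArg Subtype.val ((e n D).injective (h.trans ht))⟩

end Corepresentation

/-- Over a field `k`, the family of coendomorphism coalgebras
`coend(k^n) = (k^n)^* ⊗ k^n` — characterized by the property that `C`-comodule
structures on `k^n` correspond naturally to coalgebra morphisms `coend(k^n) → C` —
forms a strong generator of the category of `k`-coalgebras: the hom-functors out of
them are jointly conservative, and for every coalgebra `C` the canonical morphism from
the coproduct of copies of the `coend(k^n)` indexed by all coalgebra morphisms
`coend(k^n) → C` onto `C` is surjective. -/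
theorem coend_family_strong_generator
    {k : Type u} [Field k]
    (E : ℕ → Type u) [∀ n, AddCommGroup (E n)] [∀ n, Module k (E n)]
    [∀ n, Coalgebra k (E n)]
    (e : ∀ (n : ℕ) (C : Type u) [AddCommGroup C] [Module k C] [Coalgebra k C],
      {ρ : (Fin n → k) →ₗ[k] (Fin n → k) ⊗[k] C // IsComoduleStruct ρ} ≃
        (E n →ₗc[k] C))
    (hnat : ∀ (n : ℕ) (C C' : Type u) [AddCommGroup C] [Module k C] [Coalgebra k C]
      [AddCommGroup C'] [Module k C'] [Coalgebra k C'] (g : C →ₗc[k] C')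
      (ρ : {ρ : (Fin n → k) →ₗ[k] (Fin n → k) ⊗[k] C // IsComoduleStruct ρ})
      (h : IsComoduleStruct (LinearMap.lTensor (Fin n → k) g.toLinearMap ∘ₗ ρ.1)),
      e n C' ⟨LinearMap.lTensor (Fin n → k) g.toLinearMap ∘ₗ ρ.1, h⟩ =
        g.comp (e n C ρ)) :
    (∀ (C D : Type u) [AddCommGroup C] [Module k C] [Coalgebra k C]
      [AddCommGroup D] [Module k D] [Coalgebra k D] (f : C →ₗc[k] D),
      (∀ n : ℕ, Function.Bijective (fun g : E n →ₗc[k] C => f.comp g)) →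
        Function.Bijective f) ∧
    (∀ (C : Type u) [AddCommGroup C] [Module k C] [Coalgebra k C] (x : C),
      ∃ (n : ℕ) (g : E n →ₗc[k] C) (y : E n), g y = x) := by
  have hcover (C : Type u) [AddCommGroup C] [Module k C] [Coalgebra k C] (x : C) :
      ∃ (n : ℕ) (g : E n →ₗc[k] C) (y : E n), g y = x := by
    obtain ⟨n, ρ, hρ, ℓ, w, rfl⟩ := exists_matrixCoeff_eq (k := k) x
    exact ⟨n, e n C ⟨ρ, hρ⟩, _,
      (LinearMap.congr_fun (matrixCoeff_eq_comp_classifying hnat ⟨ρ, hρ⟩ ℓ) w).symm⟩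
  refine ⟨fun C D _ _ _ _ _ _ f hf => ⟨?_, fun x => ?_⟩, hcover⟩
  · exact f.injective_of_pushforward
      (fun n => pushforwardInjective_of_injective_comp hnat f (hf n).1)
      (fun n => pushforwardSurjective_of_surjective_comp hnat f (hf n).2)
  · obtain ⟨n, g, y, rfl⟩ := hcover D x
    obtain ⟨g', rfl⟩ := (hf n).2 g
    exact ⟨g' y, rfl⟩
end

section
/- Let A, B be monoids in a locally presentable braided monoidal closed category V and let X be an object with a dual. Then right P(A,B)-comodule structures on X are in natural bijection with morphisms ψ : A ⊗ X → X ⊗ B in V satisfying: (1) ψ ∘ (μ_A ⊗ X) = (X ⊗ μ_B) ∘ (ψ ⊗ B) ∘ (A ⊗ ψ), and (2) ψ ∘ (ι_A ⊗ X) = X ⊗ ι_B (modulo unit constraints). -/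
open CategoryTheory CategoryTheory.Limits Opposite

universe v u

section Conv

variable {V : Type u} [Category.{v} V] [MonoidalCategory V] [BraidedCategory V]
  [MonoidalClosed V]

open MonoidalCategory MonoidalClosed

/-- The convolution multiplication on the internal hom `[C, B]` of a comonoid `C`
and a monoid `B`. -/
noncomputable def convMul (C : Comon V) (B : Mon V) :
    ((ihom C.X).obj B.X ⊗ (ihom C.X).obj B.X) ⟶ (ihom C.X).obj B.X :=
  MonoidalClosed.curry <|
    (ComonObj.comul (X := C.X) ▷ ((ihom C.X).obj B.X ⊗ (ihom C.X).obj B.X)) ≫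
      tensorμ C.X C.X ((ihom C.X).obj B.X) ((ihom C.X).obj B.X) ≫
      ((ihom.ev C.X).app B.X ⊗ₘ (ihom.ev C.X).app B.X) ≫ MonObj.mul (X := B.X)

/-- The convolution unit on `[C, B]`. -/
noncomputable def convOne (C : Comon V) (B : Mon V) :
    𝟙_ V ⟶ (ihom C.X).obj B.X :=
  MonoidalClosed.curry ((ρ_ C.X).hom ≫ ComonObj.counit (X := C.X) ≫ MonObj.one (X := B.X))

/-- `f` is a morphism of monoids from `A` to the convolution monoid `[C, B]`. -/
def IsConvMonHom (A : Mon V) (C : Comon V) (B : Mon V)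
    (f : A.X ⟶ (ihom C.X).obj B.X) : Prop :=
  MonObj.mul (X := A.X) ≫ f = (f ⊗ₘ f) ≫ convMul C B ∧ MonObj.one (X := A.X) ≫ f = convOne C B

end Conv

open MonoidalClosed MonoidalCategory

/-!
Let `C = Y ⊗ X` be the coendomorphism comonoid of `X`, `Y` being its dual. Duality identifies
coactions `X ⟶ X ⊗ Q` with morphisms `C ⟶ Q`, the comodule axioms becoming the comonoid
morphism axioms. By the universal property of `Q`, comonoid morphisms `C ⟶ Q` are the
convolution monoid morphisms `A ⟶ [C, B]`, i.e. the measurings `C ⊗ A ⟶ B`. Finally duality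
and the braiding identify morphisms `C ⊗ A ⟶ B` with morphisms `A ⊗ X ⟶ X ⊗ B`, and under
this identification the measuring axioms become the two axioms on `ψ`.
-/

section Closed

open scoped MonObj ComonObj

variable {V : Type u} [Category.{v} V] [MonoidalCategory V] [MonoidalClosed V]

theorem uncurry_convOne (C : Comon V) (B : Mon V) :
    uncurry (convOne C B) = (ρ_ C.X).hom ≫ ε[C.X] ≫ η[B.X] :=
  uncurry_curry _

theorem uncurry_comp_pre {A B : Mon V} {C Q : Comon V} (g : C.X ⟶ Q.X)
    (f : A.X ⟶ (ihom Q.X).obj B.X) :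
    uncurry (f ≫ (pre g).app B.X) = (g ▷ A.X) ≫ uncurry f := by
  rw [uncurry_natural_left, uncurry_pre, whisker_exchange_assoc, ← uncurry_eq]

end Closed

section Measuring

open scoped MonObj ComonObj

variable {V : Type u} [Category.{v} V] [MonoidalCategory V] [BraidedCategory V]

/-- The uncurried form of a monoid morphism from `A` to the convolution monoid `[C, B]`. -/
def IsMeasuring (A : Mon V) (C : Comon V) (B : Mon V) (E : C.X ⊗ A.X ⟶ B.X) : Prop :=
  (C.X ◁ μ[A.X]) ≫ E = (Δ[C.X] ▷ (A.X ⊗ A.X)) ≫ tensorμ C.X C.X A.X A.X ≫ (E ⊗ₘ E) ≫ μ[B.X] ∧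
    (C.X ◁ η[A.X]) ≫ E = (ρ_ C.X).hom ≫ ε[C.X] ≫ η[B.X]

theorem IsMeasuring.whiskerRight_comp {A B : Mon V} {C D : Comon V} {E : C.X ⊗ A.X ⟶ B.X}
    (hE : IsMeasuring A C B E) (g : D ⟶ C) : IsMeasuring A D B ((g.hom ▷ A.X) ≫ E) := by
  constructor
  · rw [whisker_exchange_assoc, hE.1, ← comp_whiskerRight_assoc, IsComonHom.hom_comul,
      comp_whiskerRight, Category.assoc, reassoc_of% tensorμ_natural_left g.hom g.hom A.X A.X,
      tensorHom_comp_tensorHom_assoc]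
  · rw [whisker_exchange_assoc, hE.2, rightUnitor_naturality_assoc, IsComonHom.hom_counit_assoc]

variable [MonoidalClosed V]

theorem uncurry_tensorHom_comp_convMul {Z Z' : V} (C : Comon V) (B : Mon V)
    (f : Z ⟶ (ihom C.X).obj B.X) (f' : Z' ⟶ (ihom C.X).obj B.X) :
    uncurry ((f ⊗ₘ f') ≫ convMul C B) =
      (Δ[C.X] ▷ (Z ⊗ Z')) ≫ tensorμ C.X C.X Z Z' ≫ (uncurry f ⊗ₘ uncurry f') ≫ μ[B.X] := by
  rw [uncurry_natural_left, convMul, uncurry_curry, whisker_exchange_assoc,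
    reassoc_of% tensorμ_natural_right, tensorHom_comp_tensorHom_assoc, ← uncurry_eq,
    ← uncurry_eq]

theorem isConvMonHom_iff_isMeasuring {A B : Mon V} {C : Comon V}
    (f : A.X ⟶ (ihom C.X).obj B.X) : IsConvMonHom A C B f ↔ IsMeasuring A C B (uncurry f) := by
  unfold IsConvMonHom IsMeasuring
  rw [← uncurry_tensorHom_comp_convMul, ← uncurry_convOne, ← uncurry_natural_left,
    ← uncurry_natural_left, uncurry_injective.eq_iff, uncurry_injective.eq_iff]

theorem IsConvMonHom.comp_pre {A B : Mon V} {C Q : Comon V} {φ : A.X ⟶ (ihom Q.X).obj B.X}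
    (hφ : IsConvMonHom A Q B φ) (g : C ⟶ Q) : IsConvMonHom A C B (φ ≫ (pre g.hom).app B.X) := by
  rw [isConvMonHom_iff_isMeasuring, uncurry_comp_pre]
  exact ((isConvMonHom_iff_isMeasuring φ).1 hφ).whiskerRight_comp g

noncomputable def comonHomEquivConvMonHom {A B : Mon V} {Q : Comon V}
    {φ : A.X ⟶ (ihom Q.X).obj B.X} (hφ : IsConvMonHom A Q B φ)
    (hUP : ∀ (C : Comon V) (f : A.X ⟶ (ihom C.X).obj B.X), IsConvMonHom A C B f →
      ∃! g : C ⟶ Q, f = φ ≫ (pre g.hom).app B.X) (C : Comon V) :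
    (C ⟶ Q) ≃ {f : A.X ⟶ (ihom C.X).obj B.X // IsConvMonHom A C B f} :=
  Equiv.ofBijective (fun g => ⟨φ ≫ (pre g.hom).app B.X, hφ.comp_pre g⟩)
    ⟨fun g _ h => (hUP C _ (hφ.comp_pre g)).unique rfl (congrArg Subtype.val h),
      fun ⟨f, hf⟩ => (hUP C f hf).exists.imp fun _ hg => Subtype.ext hg.symm⟩

noncomputable def convMonHomEquivMeasuring (A B : Mon V) (C : Comon V) :
    {f : A.X ⟶ (ihom C.X).obj B.X // IsConvMonHom A C B f} ≃
      {E : C.X ⊗ A.X ⟶ B.X // IsMeasuring A C B E} :=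
  ((ihom.adjunction C.X).homEquiv A.X B.X).symm.subtypeEquiv isConvMonHom_iff_isMeasuring

end Measuring

section Coend

open scoped ComonObj
open ExactPairing

variable {V : Type u} [Category.{v} V] [MonoidalCategory V]

def IsCoaction (Q : Comon V) {X : V} (ρ : X ⟶ X ⊗ Q.X) : Prop :=
  ρ ≫ (X ◁ ε[Q.X]) ≫ (ρ_ X).hom = 𝟙 X ∧ ρ ≫ (X ◁ Δ[Q.X]) = ρ ≫ (ρ ▷ Q.X) ≫ (α_ X Q.X Q.X).hom

variable (X Y : V) [ExactPairing X Y]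

noncomputable def coendCoaction : X ⟶ X ⊗ (Y ⊗ X) :=
  (λ_ X).inv ≫ (η_ X Y ▷ X) ≫ (α_ X Y X).hom

theorem coendCoaction_counit : coendCoaction X Y ≫ (X ◁ ε_ X Y) = (ρ_ X).inv := by
  simp [coendCoaction]

theorem coendCoaction_coassoc :
    coendCoaction X Y ≫ (X ◁ ((Y ◁ coendCoaction X Y) ≫ (α_ Y X (Y ⊗ X)).inv)) =
      coendCoaction X Y ≫ (coendCoaction X Y ▷ (Y ⊗ X)) ≫ (α_ X (Y ⊗ X) (Y ⊗ X)).hom := by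
  simp only [coendCoaction]
  calc _ = 𝟙 _ ⊗≫ (η_ X Y ▷ 𝟙_ V ≫ (X ⊗ Y) ◁ η_ X Y) ▷ X ⊗≫ 𝟙 _ := by monoidal
    _ = 𝟙 _ ⊗≫ (𝟙_ V ◁ η_ X Y ≫ η_ X Y ▷ (X ⊗ Y)) ▷ X ⊗≫ 𝟙 _ := by rw [← whisker_exchange]
    _ = _ := by monoidal

/-- The coendomorphism comonoid `coend(X) = Xᘁ ⊗ X` of the paper, with `Y` in the role of the
dual `Xᘁ`. -/
@[reducible] noncomputable def coendComonObj : ComonObj (Y ⊗ X) where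
  counit := ε_ X Y
  comul := (Y ◁ coendCoaction X Y) ≫ (α_ Y X (Y ⊗ X)).inv
  counit_comul := by
    calc ((Y ◁ coendCoaction X Y) ≫ (α_ Y X (Y ⊗ X)).inv) ≫ (ε_ X Y ▷ (Y ⊗ X))
        = 𝟙 _ ⊗≫ (Y ◁ η_ X Y ⊗≫ ε_ X Y ▷ Y) ▷ X ⊗≫ 𝟙 _ := by
          simp only [coendCoaction]; monoidal
      _ = (λ_ (Y ⊗ X)).inv := by rw [coevaluation_evaluation'']; monoidal
  comul_counit := by
    calc ((Y ◁ coendCoaction X Y) ≫ (α_ Y X (Y ⊗ X)).inv) ≫ ((Y ⊗ X) ◁ ε_ X Y)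
        = 𝟙 _ ⊗≫ Y ◁ (η_ X Y ▷ X ⊗≫ X ◁ ε_ X Y) ⊗≫ 𝟙 _ := by
          simp only [coendCoaction]; monoidal
      _ = (ρ_ (Y ⊗ X)).inv := by rw [evaluation_coevaluation'']; monoidal
  comul_assoc := by
    calc _ = 𝟙 _ ⊗≫ Y ◁ (coendCoaction X Y ≫
            X ◁ ((Y ◁ coendCoaction X Y) ≫ (α_ Y X (Y ⊗ X)).inv)) ⊗≫ 𝟙 _ := by monoidal
      _ = 𝟙 _ ⊗≫ Y ◁ (coendCoaction X Y ≫ (coendCoaction X Y ▷ (Y ⊗ X)) ≫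
            (α_ X (Y ⊗ X) (Y ⊗ X)).hom) ⊗≫ 𝟙 _ := by rw [coendCoaction_coassoc]
      _ = _ := by monoidal

attribute [local instance] coendComonObj

noncomputable abbrev coendComon : Comon V := ⟨Y ⊗ X⟩

theorem tensorLeftHomEquiv_eq_coendCoaction_comp {Z : V} (u : Y ⊗ X ⟶ Z) :
    tensorLeftHomEquiv X X Y Z u = coendCoaction X Y ≫ (X ◁ u) := by
  simp [tensorLeftHomEquiv, coendCoaction]

theorem coendComonObj_counit : ε[Y ⊗ X] = ε_ X Y := rfl

theorem coendComonObj_comul : Δ[Y ⊗ X] = (Y ◁ coendCoaction X Y) ≫ (α_ Y X (Y ⊗ X)).inv := rfl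

theorem tensorLeftHomEquiv_comul_comp_tensorHom {Z : V} (u : Y ⊗ X ⟶ Z) :
    tensorLeftHomEquiv X X Y (Z ⊗ Z) (Δ[Y ⊗ X] ≫ (u ⊗ₘ u)) =
      tensorLeftHomEquiv X X Y Z u ≫ (tensorLeftHomEquiv X X Y Z u ▷ Z) ≫ (α_ X Z Z).hom := by
  rw [coendComonObj_comul]
  simp only [tensorLeftHomEquiv_eq_coendCoaction_comp, MonoidalCategory.whiskerLeft_comp,
    Category.assoc, comp_whiskerRight]
  rw [← MonoidalCategory.whiskerLeft_comp_assoc, reassoc_of% coendCoaction_coassoc X Y,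
    whisker_exchange_assoc]
  simp [tensorHom_def']

theorem isCoaction_tensorLeftHomEquiv_iff {Q : Comon V} (u : Y ⊗ X ⟶ Q.X) :
    IsCoaction Q (tensorLeftHomEquiv X X Y Q.X u) ↔ IsComonHom u := by
  suffices IsCoaction Q (tensorLeftHomEquiv X X Y Q.X u) ↔
      u ≫ ε[Q.X] = ε[Y ⊗ X] ∧ u ≫ Δ[Q.X] = Δ[Y ⊗ X] ≫ (u ⊗ₘ u) from
    this.trans ⟨fun ⟨h₁, h₂⟩ => ⟨h₁, h₂⟩, fun h => ⟨h.hom_counit, h.hom_comul⟩⟩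
  rw [← (tensorLeftHomEquiv X X Y _).apply_eq_iff_eq,
    ← (tensorLeftHomEquiv X X Y _).apply_eq_iff_eq (x := u ≫ Δ[Q.X]),
    tensorLeftHomEquiv_naturality, tensorLeftHomEquiv_naturality,
    tensorLeftHomEquiv_comul_comp_tensorHom, coendComonObj_counit,
    tensorLeftHomEquiv_eq_coendCoaction_comp X Y (Z := 𝟙_ V), coendCoaction_counit, IsCoaction,
    ← Category.assoc, Iso.comp_hom_eq_id, eq_comm (a := _ ≫ _ ◁ Δ[Q.X])]

noncomputable def coactionEquivComonHom (Q : Comon V) :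
    {ρ : X ⟶ X ⊗ Q.X // IsCoaction Q ρ} ≃ (coendComon X Y ⟶ Q) where
  toFun ρ :=
    { hom := (tensorLeftHomEquiv X X Y Q.X).symm ρ.1
      isComonHom_hom := (isCoaction_tensorLeftHomEquiv_iff X Y _).1 <| by
        rw [Equiv.apply_symm_apply]; exact ρ.2 }
  invFun g := ⟨tensorLeftHomEquiv X X Y Q.X g.hom,
    (isCoaction_tensorLeftHomEquiv_iff X Y g.hom).2 inferInstance⟩
  left_inv ρ := Subtype.ext (Equiv.apply_symm_apply _ _)
  right_inv g := Comon.ext (Equiv.symm_apply_apply _ _)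

end Coend

section Braid

open BraidedCategory

variable {V : Type u} [Category.{v} V] [MonoidalCategory V] [BraidedCategory V]

noncomputable def coactionBraid {X P : V} (ρ : X ⟶ X ⊗ P) (W : V) : W ⊗ X ⟶ X ⊗ (P ⊗ W) :=
  (β_ X W).inv ≫ (ρ ▷ W) ≫ (α_ X P W).hom

theorem coactionBraid_twice {X P : V} (ρ : X ⟶ X ⊗ P) (W : V) :
    (α_ W W X).hom ≫ (W ◁ coactionBraid ρ W) ≫ (α_ W X (P ⊗ W)).inv ≫
        (coactionBraid ρ W ▷ (P ⊗ W)) ≫ (α_ X (P ⊗ W) (P ⊗ W)).hom =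
      (β_ X (W ⊗ W)).inv ≫ ((ρ ≫ (ρ ▷ P) ≫ (α_ X P P).hom) ▷ (W ⊗ W)) ≫
        (α_ X (P ⊗ P) (W ⊗ W)).hom ≫ (X ◁ tensorμ P P W W) := by
  -- Split the inverse braiding of `W ⊗ W` past `X` into two; the crossing of the first copy of
  -- `W` with the second `P` then cancels against the braiding inside `tensorμ`.
  symm
  calc _ = 𝟙 _ ⊗≫ (W ◁ (β_ X W).inv) ⊗≫ (((β_ X W).inv ≫ (ρ ▷ W)) ▷ W) ⊗≫
        ((ρ ▷ P) ▷ (W ⊗ W)) ⊗≫ (X ◁ (P ◁ ((β_ P W).hom ▷ W))) ⊗≫ 𝟙 _ := by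
        rw [braiding_tensor_right_inv]
        simp only [tensorμ]
        monoidal
    _ = 𝟙 _ ⊗≫ (W ◁ (β_ X W).inv) ⊗≫ (((W ◁ ρ) ≫ ((β_ (X ⊗ P) W).inv)) ▷ W) ⊗≫
        ((ρ ▷ P) ▷ (W ⊗ W)) ⊗≫ (X ◁ (P ◁ ((β_ P W).hom ▷ W))) ⊗≫ 𝟙 _ := by
        rw [← braiding_inv_naturality_right]
    _ = 𝟙 _ ⊗≫ (W ◁ (β_ X W).inv) ⊗≫ (W ◁ (ρ ▷ W)) ⊗≫ ((β_ X W).inv ▷ (P ⊗ W)) ⊗≫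
        (((X ◁ (β_ P W).inv) ≫ (ρ ▷ (P ⊗ W))) ▷ W) ⊗≫
        (X ◁ (P ◁ ((β_ P W).hom ▷ W))) ⊗≫ 𝟙 _ := by
        rw [braiding_tensor_left_inv]
        monoidal
    _ = 𝟙 _ ⊗≫ (W ◁ (β_ X W).inv) ⊗≫ (W ◁ (ρ ▷ W)) ⊗≫ ((β_ X W).inv ▷ (P ⊗ W)) ⊗≫
        (((ρ ▷ (W ⊗ P)) ≫ ((X ⊗ P) ◁ (β_ P W).inv)) ▷ W) ⊗≫
        (X ◁ (P ◁ ((β_ P W).hom ▷ W))) ⊗≫ 𝟙 _ := by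
        rw [whisker_exchange]
    _ = 𝟙 _ ⊗≫ (W ◁ (β_ X W).inv) ⊗≫ (W ◁ (ρ ▷ W)) ⊗≫ ((β_ X W).inv ▷ (P ⊗ W)) ⊗≫
        ((ρ ▷ W) ▷ (P ⊗ W)) ⊗≫
        (X ◁ (P ◁ (((β_ P W).inv ≫ (β_ P W).hom) ▷ W))) ⊗≫ 𝟙 _ := by monoidal
    _ = _ := by rw [Iso.inv_hom_id]; simp only [coactionBraid]; monoidal

noncomputable def measuringOf {X P : V} (ρ : X ⟶ X ⊗ P) {W Z : V} (E : P ⊗ W ⟶ Z) :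
    W ⊗ X ⟶ X ⊗ Z :=
  coactionBraid ρ W ≫ (X ◁ E)

theorem measuringOf_conv {X P : V} (ρ : X ⟶ X ⊗ P) (cm : P ⟶ P ⊗ P)
    (hcm : ρ ≫ (X ◁ cm) = ρ ≫ (ρ ▷ P) ≫ (α_ X P P).hom)
    {W Z : V} (E : P ⊗ W ⟶ Z) (m : Z ⊗ Z ⟶ Z) :
    (α_ W W X).hom ≫ (W ◁ measuringOf ρ E) ≫ (α_ W X Z).inv ≫ (measuringOf ρ E ▷ Z) ≫
        (α_ X Z Z).hom ≫ (X ◁ m) =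
      measuringOf ρ ((cm ▷ (W ⊗ W)) ≫ tensorμ P P W W ≫ (E ⊗ₘ E) ≫ m) := by
  have h : measuringOf ρ ((cm ▷ (W ⊗ W)) ≫ tensorμ P P W W ≫ (E ⊗ₘ E) ≫ m) =
      (β_ X (W ⊗ W)).inv ≫ ((ρ ≫ (ρ ▷ P) ≫ (α_ X P P).hom) ▷ (W ⊗ W)) ≫
        (α_ X (P ⊗ P) (W ⊗ W)).hom ≫ (X ◁ tensorμ P P W W) ≫ (X ◁ ((E ⊗ₘ E) ≫ m)) := by
    simp only [measuringOf, coactionBraid, MonoidalCategory.whiskerLeft_comp, Category.assoc]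
    rw [← associator_naturality_middle_assoc, ← comp_whiskerRight_assoc, hcm]
  rw [h, ← reassoc_of% coactionBraid_twice]
  simp only [measuringOf, MonoidalCategory.whiskerLeft_comp, comp_whiskerRight, Category.assoc]
  rw [associator_inv_naturality_right_assoc, whisker_exchange_assoc]
  simp [tensorHom_def']

theorem measuringOf_whiskerLeft_comp {X P : V} (ρ : X ⟶ X ⊗ P) {W W' Z : V} (f : W ⟶ W')
    (E : P ⊗ W' ⟶ Z) : measuringOf ρ ((P ◁ f) ≫ E) = (f ▷ X) ≫ measuringOf ρ E := by
  simp only [measuringOf, coactionBraid, MonoidalCategory.whiskerLeft_comp, Category.assoc]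
  rw [← associator_naturality_right_assoc, ← whisker_exchange_assoc,
    ← braiding_inv_naturality_left_assoc]

theorem measuringOf_counit {X P : V} (ρ : X ⟶ X ⊗ P) (cu : P ⟶ 𝟙_ V)
    (hcu : ρ ≫ (X ◁ cu) = (ρ_ X).inv) {Z : V} (b : 𝟙_ V ⟶ Z) :
    measuringOf ρ ((ρ_ P).hom ≫ cu ≫ b) = (λ_ X).hom ≫ (ρ_ X).inv ≫ (X ◁ b) := by
  simp [measuringOf, coactionBraid, reassoc_of% hcu]

end Braid

section CoendMeasuring

open scoped MonObj ComonObj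
open BraidedCategory

attribute [local instance] coendComonObj

variable {V : Type u} [Category.{v} V] [MonoidalCategory V] [BraidedCategory V]

def IsMeasuringLaw (A B : Mon V) {X : V} (ψ : A.X ⊗ X ⟶ X ⊗ B.X) : Prop :=
  (μ[A.X] ▷ X) ≫ ψ = (α_ A.X A.X X).hom ≫ (A.X ◁ ψ) ≫ (α_ A.X X B.X).inv ≫ (ψ ▷ B.X) ≫
      (α_ X B.X B.X).hom ≫ (X ◁ μ[B.X]) ∧
    (λ_ X).inv ≫ (η[A.X] ▷ X) ≫ ψ = (ρ_ X).inv ≫ (X ◁ η[B.X])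

variable (X Y : V) [ExactPairing X Y]

noncomputable def coendHomEquiv (W Z : V) : ((Y ⊗ X) ⊗ W ⟶ Z) ≃ (W ⊗ X ⟶ X ⊗ Z) :=
  ((α_ Y X W).homCongr (Iso.refl Z)).trans
    ((tensorLeftHomEquiv (X ⊗ W) X Y Z).trans ((β_ X W).homCongr (Iso.refl (X ⊗ Z))))

theorem coendHomEquiv_apply {W Z : V} (E : (Y ⊗ X) ⊗ W ⟶ Z) :
    coendHomEquiv X Y W Z E = measuringOf (coendCoaction X Y) E := by
  simp only [coendHomEquiv, measuringOf, coactionBraid, coendCoaction, Equiv.trans_apply,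
    Iso.homCongr_apply, Iso.refl_hom, tensorLeftHomEquiv, Equiv.coe_fn_mk,
    Category.comp_id, Category.assoc]
  monoidal

theorem isMeasuring_coendComon_iff {A B : Mon V} (E : (Y ⊗ X) ⊗ A.X ⟶ B.X) :
    IsMeasuring A (coendComon X Y) B E ↔
      IsMeasuringLaw A B (measuringOf (coendCoaction X Y) E) := by
  refine and_congr ?_ ?_
  · rw [← (coendHomEquiv X Y _ _).apply_eq_iff_eq, coendHomEquiv_apply, coendHomEquiv_apply,
      measuringOf_whiskerLeft_comp,
      ← measuringOf_conv _ Δ[(coendComon X Y).X] (coendCoaction_coassoc X Y)]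
  · rw [← (coendHomEquiv X Y _ _).apply_eq_iff_eq, coendHomEquiv_apply, coendHomEquiv_apply,
      measuringOf_whiskerLeft_comp,
      measuringOf_counit _ ε[(coendComon X Y).X] (coendCoaction_counit X Y), Iso.inv_comp_eq]

noncomputable def measuringEquivMeasuringLaw (A B : Mon V) :
    {E : (coendComon X Y).X ⊗ A.X ⟶ B.X // IsMeasuring A (coendComon X Y) B E} ≃
      {ψ : A.X ⊗ X ⟶ X ⊗ B.X // IsMeasuringLaw A B ψ} :=
  (coendHomEquiv X Y A.X B.X).subtypeEquiv fun E => by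
    rw [coendHomEquiv_apply]; exact isMeasuring_coendComon_iff X Y E

end CoendMeasuring

theorem comodule_structures_equiv_measuring_morphisms_general
    {V : Type u} [Category.{v} V] [MonoidalCategory V] [BraidedCategory V]
    [MonoidalClosed V]
    (A B : Mon V)
    (Q : Comon V) (η : A.X ⟶ (ihom Q.X).obj B.X)
    (hη : IsConvMonHom A Q B η)
    (hUP : ∀ (C : Comon V) (f : A.X ⟶ (ihom C.X).obj B.X), IsConvMonHom A C B f →
      ∃! g : C ⟶ Q, f = η ≫ (MonoidalClosed.pre g.hom).app B.X)
    (X : V) [HasLeftDual X] :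
    Nonempty (
      {ρ : X ⟶ (X ⊗ Q.X : V) //
          ρ ≫ (X ◁ ComonObj.counit (X := Q.X)) ≫ (ρ_ X).hom = 𝟙 X ∧
          ρ ≫ (X ◁ ComonObj.comul (X := Q.X)) = ρ ≫ (ρ ▷ Q.X) ≫ (α_ X Q.X Q.X).hom } ≃
      {ψ : (A.X ⊗ X : V) ⟶ (X ⊗ B.X : V) //
          (MonObj.mul (X := A.X) ▷ X) ≫ ψ =
            (α_ A.X A.X X).hom ≫ (A.X ◁ ψ) ≫ (α_ A.X X B.X).inv ≫
              (ψ ▷ B.X) ≫ (α_ X B.X B.X).hom ≫ (X ◁ MonObj.mul (X := B.X)) ∧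
          (λ_ X).inv ≫ (MonObj.one (X := A.X) ▷ X) ≫ ψ = (ρ_ X).inv ≫ (X ◁ MonObj.one (X := B.X)) }) := by
  let _ : ExactPairing X (ᘁX) := BraidedCategory.exactPairing_swap (ᘁX) X
  exact ⟨(coactionEquivComonHom X (ᘁX) Q).trans <|
    (comonHomEquivConvMonHom hη hUP _).trans <|
      (convMonHomEquivMeasuring A B _).trans (measuringEquivMeasuringLaw X (ᘁX) A B)⟩

/-- Let `A`, `B` be monoids in a locally presentable braided monoidal closed category
`V`, let `P(A,B)` be the universal measuring comonoid, and let `X` be an object with a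
dual.  Then right `P(A,B)`-comodule structures on `X` are in bijection with morphisms
`ψ : A ⊗ X ⟶ X ⊗ B` satisfying `ψ ∘ (μ_A ⊗ X) = (X ⊗ μ_B) ∘ (ψ ⊗ B) ∘ (A ⊗ ψ)` and
`ψ ∘ (ι_A ⊗ X) = X ⊗ ι_B` (modulo the structural constraint isomorphisms). -/
theorem comodule_structures_equiv_measuring_morphisms
    {V : Type u} [Category.{v} V] [MonoidalCategory V] [BraidedCategory V]
    [MonoidalClosed V] (hV : IsLocallyPresentableCat V)
    (A B : Mon V)
    (Q : Comon V) (η : A.X ⟶ (ihom Q.X).obj B.X)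
    (hη : IsConvMonHom A Q B η)
    (hUP : ∀ (C : Comon V) (f : A.X ⟶ (ihom C.X).obj B.X), IsConvMonHom A C B f →
      ∃! g : C ⟶ Q, f = η ≫ (MonoidalClosed.pre g.hom).app B.X)
    (X : V) [HasLeftDual X] :
    Nonempty (
      {ρ : X ⟶ (X ⊗ Q.X : V) //
          ρ ≫ (X ◁ ComonObj.counit (X := Q.X)) ≫ (ρ_ X).hom = 𝟙 X ∧
          ρ ≫ (X ◁ ComonObj.comul (X := Q.X)) = ρ ≫ (ρ ▷ Q.X) ≫ (α_ X Q.X Q.X).hom } ≃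
      {ψ : (A.X ⊗ X : V) ⟶ (X ⊗ B.X : V) //
          (MonObj.mul (X := A.X) ▷ X) ≫ ψ =
            (α_ A.X A.X X).hom ≫ (A.X ◁ ψ) ≫ (α_ A.X X B.X).inv ≫
              (ψ ▷ B.X) ≫ (α_ X B.X B.X).hom ≫ (X ◁ MonObj.mul (X := B.X)) ∧
          (λ_ X).inv ≫ (MonObj.one (X := A.X) ▷ X) ≫ ψ = (ρ_ X).inv ≫ (X ◁ MonObj.one (X := B.X)) }) :=
  comodule_structures_equiv_measuring_morphisms_general A B Q η hη hUP X
end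

section
/- Let H be a bimonoid in a braided monoidal category. Then H is a Hopf monoid (i.e. admits an antipode) if and only if the fusion operator h = (H ⊗ μ) ∘ (Δ ⊗ H) : H⊗H → H⊗H is invertible, if and only if the fusion operator h' = (μ ⊗ H) ∘ (H ⊗ Δ) : H⊗H → H⊗H is invertible. -/
/-!
The map `f ↦ Δ ▷ X ≫ α ≫ X ◁ (f ▷ X ≫ μ)` is an injective monoid morphism from the
convolution monoid `Conv X X` to `End (X ⊗ X)`, sending `𝟙 X` to the fusion operator. Its image
consists exactly of the endomorphisms `F` of `X ⊗ X` that are right `X`-linear and left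
`X`-colinear, `F` being the image of `(ρ_ X).inv ≫ X ◁ η ≫ F ≫ ε ▷ X ≫ (λ_ X).hom`.
The inverse of such an `F` is again one, so the fusion operator is invertible iff `𝟙 X` is a
unit for convolution, i.e. iff an antipode exists. The second fusion operator is the first one
computed in `Cᵒᵖ`, where `μ` and `Δ` swap roles.
-/

open CategoryTheory MonoidalCategory MonObj ComonObj Opposite

universe v u

namespace CategoryTheory

variable {C : Type*} [Category C] [MonoidalCategory C]

theorem MonObj.eq_lift_of_linear {X Y Z : C} [MonObj X] (F : Y ⊗ X ⟶ Z ⊗ X)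
    (hF : (α_ Y X X).hom ≫ Y ◁ μ ≫ F = F ▷ X ≫ (α_ Z X X).hom ≫ Z ◁ μ) :
    F = ((ρ_ Y).inv ≫ Y ◁ η ≫ F) ▷ X ≫ (α_ Z X X).hom ≫ Z ◁ μ :=
  calc F = Y ◁ (λ_ X).inv ≫ Y ◁ (η ▷ X) ≫ Y ◁ μ ≫ F := by
        rw [← whiskerLeft_comp_assoc (f := η ▷ X), MonObj.one_mul]; simp
    _ = Y ◁ (λ_ X).inv ≫ Y ◁ (η ▷ X) ≫ (α_ Y X X).inv ≫ F ▷ X ≫ (α_ Z X X).hom ≫ Z ◁ μ := by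
      rw [(Iso.eq_inv_comp _).2 hF]
    _ = _ := by monoidal

theorem ComonObj.eq_colift_of_colinear {X Y Z : C} [ComonObj X] (F : X ⊗ Y ⟶ X ⊗ Z)
    (hF : F ≫ Δ ▷ Z ≫ (α_ X X Z).hom = Δ ▷ Y ≫ (α_ X X Y).hom ≫ X ◁ F) :
    F = Δ ▷ Y ≫ (α_ X X Y).hom ≫ X ◁ (F ≫ ε ▷ Z ≫ (λ_ Z).hom) :=
  calc F = F ≫ Δ ▷ Z ≫ (α_ X X Z).hom ≫ (α_ X X Z).inv ≫ (X ◁ ε) ▷ Z ≫ (ρ_ X).hom ▷ Z := by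
        rw [Iso.hom_inv_id_assoc, ← comp_whiskerRight_assoc, comul_counit, ← comp_whiskerRight]
        simp
    _ = Δ ▷ Y ≫ (α_ X X Y).hom ≫ X ◁ F ≫ (α_ X X Z).inv ≫ (X ◁ ε) ▷ Z ≫ (ρ_ X).hom ▷ Z := by
      rw [reassoc_of% hF]
    _ = _ := by monoidal

section Fusion

variable (X : C) [MonObj X] [ComonObj X]

def fusionWith (f : X ⟶ X) : X ⊗ X ⟶ X ⊗ X := Δ ▷ X ≫ (α_ X X X).hom ≫ X ◁ (f ▷ X ≫ μ)

def fusion : X ⊗ X ⟶ X ⊗ X := Δ ▷ X ≫ (α_ X X X).hom ≫ X ◁ μ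

theorem fusionWith_id : fusionWith X (𝟙 X) = fusion X := by
  rw [fusionWith, id_whiskerRight, Category.id_comp, fusion]

theorem fusionWith_counit_comp_unit : fusionWith X (ε ≫ η) = 𝟙 (X ⊗ X) := by
  rw [fusionWith, comp_whiskerRight, Category.assoc, MonObj.one_mul, whiskerLeft_comp,
    ← associator_naturality_middle_assoc, ← comp_whiskerRight_assoc, comul_counit]
  monoidal

theorem fusionWith_comp (f g : X ⟶ X) :
    fusionWith X g ≫ fusionWith X f = fusionWith X (Δ ≫ f ▷ X ≫ X ◁ g ≫ μ) := by
  simp only [fusionWith, comp_whiskerRight, whiskerLeft_comp, Category.assoc]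
  rw [← whiskerLeft_comp (f := μ ▷ X), MonObj.mul_assoc]
  simp only [whiskerLeft_comp]
  rw [whisker_exchange_assoc, whisker_exchange_assoc, associator_naturality_right_assoc,
    associator_naturality_right_assoc, ← associator_naturality_left_assoc (f := Δ),
    ← comp_whiskerRight_assoc, comul_assoc_flip, ← whiskerLeft_comp_assoc (f := X ◁ μ),
    whisker_exchange, whiskerLeft_comp_assoc, ← whiskerLeft_comp_assoc (f := X ◁ (g ▷ X)),
    whisker_exchange]
  monoidal

def fusionCoeff (F : X ⊗ X ⟶ X ⊗ X) : X ⟶ X :=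
  (ρ_ X).inv ≫ X ◁ η ≫ F ≫ ε ▷ X ≫ (λ_ X).hom

theorem fusionCoeff_fusionWith (f : X ⟶ X) : fusionCoeff X (fusionWith X f) = f := by
  have hf : (ρ_ X).inv ≫ X ◁ η ≫ f ▷ X ≫ μ = f := by
    rw [whisker_exchange_assoc, MonObj.mul_one, ← rightUnitor_inv_naturality_assoc,
      Iso.inv_hom_id, Category.comp_id]
  calc fusionCoeff X (fusionWith X f)
    _ = Δ ≫ X ◁ ((ρ_ X).inv ≫ X ◁ η ≫ f ▷ X ≫ μ) ≫ ε ▷ X ≫ (λ_ X).hom := by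
      rw [fusionCoeff, fusionWith, Category.assoc, whisker_exchange_assoc Δ η]
      monoidal
    _ = Δ ≫ ε ▷ X ≫ (λ_ X).hom ≫ f := by
      rw [hf, whisker_exchange_assoc, leftUnitor_naturality]
    _ = f := by rw [counit_comul_assoc, Iso.inv_hom_id_assoc]

/-- `X ⊗ X` is a right `X`-module through `μ` on the second factor and a left `X`-comodule
through `Δ` on the first. -/
structure IsModComodHom (F : X ⊗ X ⟶ X ⊗ X) : Prop where
  linear : (α_ X X X).hom ≫ X ◁ μ ≫ F = F ▷ X ≫ (α_ X X X).hom ≫ X ◁ μ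
  colinear : F ≫ Δ ▷ X ≫ (α_ X X X).hom = Δ ▷ X ≫ (α_ X X X).hom ≫ X ◁ F

theorem isModComodHom_fusionWith (f : X ⟶ X) : IsModComodHom X (fusionWith X f) where
  linear := by
    have hf : (f ▷ X ≫ μ) ▷ X ≫ μ = (α_ X X X).hom ≫ X ◁ μ ≫ f ▷ X ≫ μ := by
      rw [comp_whiskerRight_assoc, MonObj.mul_assoc, associator_naturality_left_assoc,
        ← whisker_exchange_assoc]
    simp only [fusionWith, comp_whiskerRight, Category.assoc]
    rw [whisker_exchange_assoc Δ μ, associator_naturality_middle_assoc, ← whiskerLeft_comp, hf]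
    monoidal
  colinear := by
    simp only [fusionWith, Category.assoc]
    rw [whisker_exchange_assoc Δ (f ▷ X ≫ μ), ← associator_naturality_left_assoc,
      ← comp_whiskerRight_assoc, comul_assoc_flip]
    monoidal

variable {X}

theorem IsModComodHom.inv {F : X ⊗ X ⟶ X ⊗ X} [IsIso F] (hF : IsModComodHom X F) :
    IsModComodHom X (inv F) where
  linear := by
    rw [← cancel_epi (F ▷ X), ← comp_whiskerRight_assoc, IsIso.hom_inv_id, id_whiskerRight,
      Category.id_comp, ← reassoc_of% hF.linear, IsIso.hom_inv_id, Category.comp_id]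
  colinear := by
    rw [← cancel_mono (X ◁ F)]
    simp only [Category.assoc, ← whiskerLeft_comp, IsIso.inv_hom_id, whiskerLeft_id,
      Category.comp_id]
    rw [← hF.colinear, IsIso.inv_hom_id_assoc]

theorem IsModComodHom.eq_fusionWith {F : X ⊗ X ⟶ X ⊗ X} (hF : IsModComodHom X F) :
    F = fusionWith X (fusionCoeff X F) := by
  have hF' : F ≫ ε ▷ X ≫ (λ_ X).hom = fusionCoeff X F ▷ X ≫ μ := by
    conv_lhs => rw [eq_lift_of_linear F hF.linear]
    simp only [fusionCoeff, comp_whiskerRight, Category.assoc]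
    rw [whisker_exchange_assoc, leftUnitor_naturality]
    monoidal
  rw [fusionWith, ← hF']
  exact eq_colift_of_colinear F hF.colinear

variable (X)

def Conv.toEndTensor : Conv X X →* End (X ⊗ X) where
  toFun := fusionWith X
  map_one' := fusionWith_counit_comp_unit X
  map_mul' f g := (fusionWith_comp X f g).symm

theorem Conv.toEndTensor_injective : Function.Injective (toEndTensor X) :=
  Function.LeftInverse.injective (fusionCoeff_fusionWith X)

theorem Conv.isUnit_iff_isIso_fusionWith (f : Conv X X) :
    IsUnit f ↔ IsIso (fusionWith X f) := by
  refine ⟨fun h => (isUnit_iff_isIso _).1 (h.map (toEndTensor X)), fun _ => ?_⟩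
  obtain ⟨g, hg⟩ : ∃ g, inv (fusionWith X f) = toEndTensor X g :=
    ⟨_, (isModComodHom_fusionWith X f).inv.eq_fusionWith⟩
  refine isUnit_iff_exists.2 ⟨g, toEndTensor_injective X ?_, toEndTensor_injective X ?_⟩
  · rw [map_mul, map_one, End.mul_def, End.one_def, ← hg]
    exact IsIso.inv_hom_id (fusionWith X f)
  · rw [map_mul, map_one, End.mul_def, End.one_def, ← hg]
    exact IsIso.hom_inv_id (fusionWith X f)

theorem exists_antipode_iff_isUnit :
    (∃ s : X ⟶ X, Δ ≫ s ▷ X ≫ μ = ε ≫ η ∧ Δ ≫ X ◁ s ≫ μ = ε ≫ η) ↔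
      IsUnit (M := Conv X X) (𝟙 X) :=
  calc _ ↔ ∃ s : X ⟶ X,
        Δ ≫ 𝟙 X ▷ X ≫ X ◁ s ≫ μ = ε ≫ η ∧ Δ ≫ s ▷ X ≫ X ◁ 𝟙 X ≫ μ = ε ≫ η := by
        simp [and_comm]
    _ ↔ _ := (isUnit_iff_exists (M := Conv X X) (x := 𝟙 X)).symm

theorem exists_antipode_iff_isIso_fusion :
    (∃ s : X ⟶ X, Δ ≫ s ▷ X ≫ μ = ε ≫ η ∧ Δ ≫ X ◁ s ≫ μ = ε ≫ η) ↔ IsIso (fusion X) := by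
  rw [← fusionWith_id]
  exact (exists_antipode_iff_isUnit X).trans (Conv.isUnit_iff_isIso_fusionWith X (𝟙 X))

end Fusion

section Opposite

variable (X : C)

instance [ComonObj X] : MonObj (op X) := Comon.ComonToMonOpOpObjMon ⟨X⟩

instance [MonObj X] : ComonObj (op X) where
  counit := η[X].op
  comul := μ[X].op
  counit_comul := by apply Quiver.Hom.unop_inj; simp
  comul_counit := by apply Quiver.Hom.unop_inj; simp
  comul_assoc := by apply Quiver.Hom.unop_inj; simp

@[simp]
theorem mul_op [ComonObj X] : μ[op X] = Δ[X].op := rfl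

@[simp]
theorem comul_op [MonObj X] : Δ[op X] = μ[X].op := rfl

variable [MonObj X] [ComonObj X]

def Conv.opMulEquiv : Conv X X ≃* Conv (op X) (op X) where
  toFun f := Quiver.Hom.op f
  invFun f := Quiver.Hom.unop f
  left_inv _ := rfl
  right_inv _ := rfl
  map_mul' f g := by
    refine (congrArg Quiver.Hom.op (Conv.mul_eq f g)).trans (.trans ?_ (Conv.mul_eq _ _).symm)
    apply Quiver.Hom.unop_inj
    simp only [unop_comp, unop_whiskerLeft, unop_whiskerRight, mul_op, comul_op, Category.assoc]
    exact congrArg (Δ ≫ ·) (whisker_exchange_assoc f g μ).symm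

def fusion' : X ⊗ X ⟶ X ⊗ X := X ◁ Δ ≫ (α_ X X X).inv ≫ μ ▷ X

theorem fusion_op : fusion (op X) = (fusion' X).op := by
  apply Quiver.Hom.unop_inj
  simp [fusion, fusion']

theorem exists_antipode_iff_isIso_fusion' :
    (∃ s : X ⟶ X, Δ ≫ s ▷ X ≫ μ = ε ≫ η ∧ Δ ≫ X ◁ s ≫ μ = ε ≫ η) ↔ IsIso (fusion' X) := by
  rw [← isIso_op_iff, ← fusion_op, ← fusionWith_id]
  exact (exists_antipode_iff_isUnit X).trans <|
    (MulEquiv.isUnit_map (Conv.opMulEquiv X)).symm.trans <|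
      Conv.isUnit_iff_isIso_fusionWith (op X) _

end Opposite

end CategoryTheory

/-- Let `H` be a bimonoid in a braided monoidal category.  Then `H` is a Hopf monoid
(i.e. admits an antipode) if and only if the fusion operator
`h = (H ⊗ μ) ∘ (Δ ⊗ H) : H ⊗ H ⟶ H ⊗ H` is invertible, if and only if the fusion
operator `h' = (μ ⊗ H) ∘ (H ⊗ Δ) : H ⊗ H ⟶ H ⊗ H` is invertible. -/
theorem bimon_hopf_iff_fusion_iso {V : Type u} [Category.{v} V] [MonoidalCategory V]
    [BraidedCategory V] (H : Bimon V) :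
    ((∃ s : H.X.X ⟶ H.X.X,
        H.comon.comul.hom ≫ (s ▷ H.X.X) ≫ MonObj.mul (X := H.X.X) = H.comon.counit.hom ≫ MonObj.one (X := H.X.X) ∧
        H.comon.comul.hom ≫ (H.X.X ◁ s) ≫ MonObj.mul (X := H.X.X) = H.comon.counit.hom ≫ MonObj.one (X := H.X.X)) ↔
      IsIso ((H.comon.comul.hom ▷ H.X.X) ≫ (α_ H.X.X H.X.X H.X.X).hom ≫ (H.X.X ◁ MonObj.mul (X := H.X.X)))) ∧
    ((∃ s : H.X.X ⟶ H.X.X,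
        H.comon.comul.hom ≫ (s ▷ H.X.X) ≫ MonObj.mul (X := H.X.X) = H.comon.counit.hom ≫ MonObj.one (X := H.X.X) ∧
        H.comon.comul.hom ≫ (H.X.X ◁ s) ≫ MonObj.mul (X := H.X.X) = H.comon.counit.hom ≫ MonObj.one (X := H.X.X)) ↔
      IsIso ((H.X.X ◁ H.comon.comul.hom) ≫ (α_ H.X.X H.X.X H.X.X).inv ≫ (MonObj.mul (X := H.X.X) ▷ H.X.X))) :=
  ⟨exists_antipode_iff_isIso_fusion H.X.X, exists_antipode_iff_isIso_fusion' H.X.X⟩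
end
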